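/- arXiv:0803.1248 — 3 statements merged into one kernel-verified Lean document; each statement's English description precedes it below -/
import Mathlib

section
/- Suppose U, W ∈ W₀ and (Uₙ), (Wₙ) are sequences in W₀ with ‖Uₙ − U‖_□ → 0 and ‖Wₙ − W‖_□ → 0 as n → ∞. Then liminf_{n→∞} ‖Wₙ − Uₙ‖₁ ≥ ‖W − U‖₁. -/
open MeasureTheory Filter Topology
open scoped ENNReal

noncomputable section

/-- The unit interval `[0,1]` as a subset of `ℝ`. -/
def I01 : Set ℝ := Set.Icc 0 1

/-- `W₀`: symmetric measurable functions `[0,1]² → [0,1]`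
(represented as functions `ℝ → ℝ → ℝ`, with the relevant values on `[0,1]²`). -/
def IsGraphon (W : ℝ → ℝ → ℝ) : Prop :=
  Measurable (Function.uncurry W) ∧ (∀ x y, W x y = W y x) ∧
    ∀ x y, W x y ∈ Set.Icc (0 : ℝ) 1

/-- The `L¹` norm of a kernel on `[0,1]²`. -/
def l1Norm (W : ℝ → ℝ → ℝ) : ℝ :=
  ∫ x in I01, ∫ y in I01, |W x y|

/-- The cut norm of a kernel on `[0,1]²`. -/
def cutNorm (W : ℝ → ℝ → ℝ) : ℝ :=
  sSup { r : ℝ | ∃ S T : Set ℝ, MeasurableSet S ∧ MeasurableSet T ∧ S ⊆ I01 ∧ T ⊆ I01 ∧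
    r = |∫ x in S, ∫ y in T, W x y| }

/-- An invertible measure preserving map of `[0,1]`. -/
structure InvMP where
  toFun : ℝ → ℝ
  invFun : ℝ → ℝ
  maps : ∀ x ∈ I01, toFun x ∈ I01
  mapsInv : ∀ x ∈ I01, invFun x ∈ I01
  measurePreserving :
    MeasurePreserving toFun (volume.restrict I01) (volume.restrict I01)
  measurePreservingInv :
    MeasurePreserving invFun (volume.restrict I01) (volume.restrict I01)
  leftInv : ∀ x ∈ I01, invFun (toFun x) = x
  rightInv : ∀ x ∈ I01, toFun (invFun x) = x

/-- `δ_□`: the cut distance, infimum of the cut norm over invertible measure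
preserving transformations of `[0,1]`. -/
def deltaCut (U W : ℝ → ℝ → ℝ) : ℝ :=
  ⨅ φ : InvMP, cutNorm (fun x y => U x y - W (φ.toFun x) (φ.toFun y))

/-- `δ₁`: the `L¹` distance minimized over invertible measure preserving
transformations of `[0,1]`. -/
def delta1 (U W : ℝ → ℝ → ℝ) : ℝ :=
  ⨅ φ : InvMP, l1Norm (fun x y => U x y - W (φ.toFun x) (φ.toFun y))



/-- A graph property: for each `n`, a set of simple graphs on `Fin n`. -/
def GraphProp := ∀ n : ℕ, Set (SimpleGraph (Fin n))

/-- Invariance under isomorphism (isomorphic graphs necessarily have the same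
number of vertices). -/
def IsGraphProperty (P : GraphProp) : Prop :=
  ∀ (n : ℕ) (G H : SimpleGraph (Fin n)), Nonempty (G ≃g H) → (G ∈ P n ↔ H ∈ P n)

/-- The normalized edit distance between graphs on a common vertex set. -/
def graphD1 {n : ℕ} (G H : SimpleGraph (Fin n)) : ℝ :=
  (symmDiff G.edgeSet H.edgeSet).ncard / (n ^ 2 : ℝ)

/-- The edit distance from a graph to a graph property (∞ if the property
contains no graph on the same number of nodes). -/
def graphD1P {n : ℕ} (G : SimpleGraph (Fin n)) (P : GraphProp) : ℝ≥0∞ :=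
  ⨅ (H : SimpleGraph (Fin n)) (_ : H ∈ P n), ENNReal.ofReal (graphD1 G H)

open Classical in
/-- The step function `W_G` associated with a graph `G` on `{1,…,n}`:
its value on `((i−1)/n, i/n] × ((j−1)/n, j/n]` is `1` iff `ij ∈ E(G)`. -/
def graphonOf {n : ℕ} (G : SimpleGraph (Fin n)) : ℝ → ℝ → ℝ := fun x y =>
  if ∃ i j : Fin n, G.Adj i j ∧ x ∈ Set.Ioc (((i : ℕ) : ℝ) / n) ((((i : ℕ) : ℝ) + 1) / n)
      ∧ y ∈ Set.Ioc (((j : ℕ) : ℝ) / n) ((((j : ℕ) : ℝ) + 1) / n)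
  then 1 else 0

/-- `H` is (isomorphic to) an induced subgraph of `G`. -/
def IsInducedSubgraph {n k : ℕ} (G : SimpleGraph (Fin n)) (H : SimpleGraph (Fin k)) : Prop :=
  ∃ f : Fin k ↪ Fin n, ∀ i j, H.Adj i j ↔ G.Adj (f i) (f j)

/-- The subgraph of `G` induced on the vertex subset `S` has property `P`
(as a graph on `k = |S|` nodes). -/
def inducedMem {n : ℕ} (G : SimpleGraph (Fin n)) (S : Finset (Fin n)) (k : ℕ)
    (P : GraphProp) : Prop :=
  ∃ H : SimpleGraph (Fin k), H ∈ P k ∧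
    ∃ f : Fin k ↪ Fin n, (∀ i, f i ∈ S) ∧ ∀ i j, H.Adj i j ↔ G.Adj (f i) (f j)

/-- The number of `k`-element vertex subsets of `G` inducing a subgraph with property `P`. -/
def goodCount {n : ℕ} (G : SimpleGraph (Fin n)) (k : ℕ) (P : GraphProp) : ℕ :=
  {S : Finset (Fin n) | S.card = k ∧ inducedMem G S k P}.ncard

/-- Testability of a graph property (Definition 1.1 of the paper). -/
def GraphTestable (P : GraphProp) : Prop :=
  ∃ P' : GraphProp, IsGraphProperty P' ∧
    (∀ (n : ℕ) (G : SimpleGraph (Fin n)), G ∈ P n → ∀ k, 1 ≤ k → k ≤ n →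
      2 * n.choose k ≤ 3 * goodCount G k P') ∧
    (∀ ε : ℝ, 0 < ε → ∃ kε : ℕ, 1 ≤ kε ∧
      ∀ (n : ℕ) (G : SimpleGraph (Fin n)) (k : ℕ), kε ≤ k → k ≤ n →
        ENNReal.ofReal ε ≤ graphD1P G P →
        3 * goodCount G k P' ≤ n.choose k)

def cube (k : ℕ) : Set (Fin k → ℝ) := Set.univ.pi fun _ => I01

open Classical in
/-- The homomorphism density `t(F,W)`. -/
def homDensity {k : ℕ} (F : SimpleGraph (Fin k)) (W : ℝ → ℝ → ℝ) : ℝ :=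
  ∫ x in cube k, ∏ i : Fin k, ∏ j : Fin k,
    if i < j ∧ F.Adj i j then W (x i) (x j) else 1

open Classical in
/-- The induced density `t_ind(F,W)`. -/
def indDensity {k : ℕ} (F : SimpleGraph (Fin k)) (W : ℝ → ℝ → ℝ) : ℝ :=
  ∫ x in cube k, ∏ i : Fin k, ∏ j : Fin k,
    if i < j then (if F.Adj i j then W (x i) (x j) else 1 - W (x i) (x j)) else 1

/-- Isomorphism of functions in `W₀`: equality of all homomorphism densities. -/
def GraphonIso (U W : ℝ → ℝ → ℝ) : Prop :=
  ∀ (k : ℕ) (F : SimpleGraph (Fin k)), homDensity F U = homDensity F W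

open Classical in
/-- `P(G(k,W) ∈ R')`, the probability that the `W`-random graph on `k` nodes
has property `R'`. -/
def probIn (k : ℕ) (W : ℝ → ℝ → ℝ) (R' : GraphProp) : ℝ :=
  ∑ F : SimpleGraph (Fin k), if F ∈ R' k then indDensity F W else 0

/-- The `L¹` distance from `W` to a set `R` of kernels, with value `∞` for `R = ∅`. -/
def d1SetE (W : ℝ → ℝ → ℝ) (R : Set (ℝ → ℝ → ℝ)) : ℝ≥0∞ :=
  ⨅ (U : ℝ → ℝ → ℝ) (_ : U ∈ R), ENNReal.ofReal (l1Norm fun x y => W x y - U x y)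

/-- The cut-norm distance from `W` to a set `R` of kernels, with value `∞` for `R = ∅`. -/
def dCutSetE (W : ℝ → ℝ → ℝ) (R : Set (ℝ → ℝ → ℝ)) : ℝ≥0∞ :=
  ⨅ (U : ℝ → ℝ → ℝ) (_ : U ∈ R), ENNReal.ofReal (cutNorm fun x y => W x y - U x y)

/-- The open ball `B₁(R,c)` (within `W₀`). -/
def ball1 (R : Set (ℝ → ℝ → ℝ)) (c : ℝ) : Set (ℝ → ℝ → ℝ) :=
  {W | IsGraphon W ∧ d1SetE W R < ENNReal.ofReal c}

/-- The open ball `B_□(R,c)` (within `W₀`). -/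
def ballCut (R : Set (ℝ → ℝ → ℝ)) (c : ℝ) : Set (ℝ → ℝ → ℝ) :=
  {W | IsGraphon W ∧ dCutSetE W R < ENNReal.ofReal c}

/-- A graphon property: a set of graphons invariant under isomorphism. -/
def IsGraphonProperty (R : Set (ℝ → ℝ → ℝ)) : Prop :=
  (∀ W ∈ R, IsGraphon W) ∧
    ∀ U W, IsGraphon U → IsGraphon W → GraphonIso U W → (U ∈ R ↔ W ∈ R)

/-- A set of graphons is closed if it is closed in the cut norm. -/
def CutClosed (R : Set (ℝ → ℝ → ℝ)) : Prop :=
  ∀ W, IsGraphon W →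
    (∀ ε : ℝ, 0 < ε → ∃ U ∈ R, cutNorm (fun x y => W x y - U x y) < ε) → W ∈ R

/-- Testability of a graphon property. -/
def GraphonTestable (R : Set (ℝ → ℝ → ℝ)) : Prop :=
  ∃ R' : GraphProp, IsGraphProperty R' ∧
    (∀ W ∈ R, ∀ k : ℕ, 1 ≤ k → (2 : ℝ) / 3 ≤ probIn k W R') ∧
    (∀ ε : ℝ, 0 < ε → ∃ kε : ℕ, 1 ≤ kε ∧ ∀ k, kε ≤ k → ∀ W, IsGraphon W →
      ENNReal.ofReal ε ≤ d1SetE W R → probIn k W R' ≤ 1 / 3)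

/-- The closure `P̄` of a graph property: limits of convergent sequences
of graphs in `P` with sizes tending to infinity. -/
def closureP (P : GraphProp) : Set (ℝ → ℝ → ℝ) :=
  {W | IsGraphon W ∧ ∃ (n : ℕ → ℕ) (G : ∀ m, SimpleGraph (Fin (n m))),
    (∀ m, G m ∈ P (n m)) ∧ Tendsto n atTop atTop ∧
    Tendsto (fun m => deltaCut (graphonOf (G m)) W) atTop (nhds 0)}

/-- A graph property is robust if graphs whose `W_G` is `d₁`-close to `P̄`
are themselves close to `P` in edit distance. -/
def Robust (P : GraphProp) : Prop :=
  ∀ ε : ℝ, 0 < ε → ∃ (N : ℕ) (ε' : ℝ), 1 ≤ N ∧ 0 < ε' ∧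
    ∀ (n : ℕ), N ≤ n → ∀ G : SimpleGraph (Fin n),
      d1SetE (graphonOf G) (closureP P) ≤ ENNReal.ofReal ε' →
      graphD1P G P ≤ ENNReal.ofReal ε

/-- A hereditary graph property: closed under induced subgraphs. -/
def Hereditary (P : GraphProp) : Prop :=
  ∀ (n : ℕ) (G : SimpleGraph (Fin n)), G ∈ P n →
    ∀ (k : ℕ) (H : SimpleGraph (Fin k)), IsInducedSubgraph G H → H ∈ P k

/-- `U` is a flexing of `W`: `U ∈ W₀` agrees with `W` wherever `W` takes value `0` or `1`. -/
def Flexing (U W : ℝ → ℝ → ℝ) : Prop :=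
  IsGraphon U ∧ ∀ x y, (W x y = 0 ∨ W x y = 1) → U x y = W x y

/-- A function property is flexible if it is preserved under flexing. -/
def FlexibleFamily (R : Set (ℝ → ℝ → ℝ)) : Prop :=
  ∀ W ∈ R, ∀ U, Flexing U W → U ∈ R

/-- `U' ≤ W'` almost everywhere on `[0,1]²`. -/
def aeLE (U W : ℝ → ℝ → ℝ) : Prop :=
  ∀ᵐ p ∂(volume.restrict (I01 ×ˢ I01)), U p.1 p.2 ≤ W p.1 p.2

/-- `U ⪯ W`: up to isomorphism, `U ≤ W` almost everywhere. -/
def graphonLE (U W : ℝ → ℝ → ℝ) : Prop :=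
  ∃ U' W', IsGraphon U' ∧ IsGraphon W' ∧ GraphonIso U U' ∧ GraphonIso W W' ∧ aeLE U' W'

/-- The upward closure of a graph property: graphs having a spanning subgraph in `P`. -/
def upP (P : GraphProp) : GraphProp :=
  fun n => {G | ∃ H : SimpleGraph (Fin n), H ∈ P n ∧ H ≤ G}

/-- The upward closure of a function property. -/
def upR (R : Set (ℝ → ℝ → ℝ)) : Set (ℝ → ℝ → ℝ) :=
  {W | IsGraphon W ∧ ∃ U ∈ R, graphonLE U W}

/-- A stepfunction: constant on the products of a finite measurable partition of `[0,1]`. -/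
def IsStepfunction (W : ℝ → ℝ → ℝ) : Prop :=
  ∃ (m : ℕ) (S : Fin m → Set ℝ), (∀ i, MeasurableSet (S i)) ∧
    (⋃ i, S i) = I01 ∧ (∀ i j, i ≠ j → Disjoint (S i) (S j)) ∧
    ∀ i j : Fin m, ∀ x ∈ S i, ∀ x' ∈ S i, ∀ y ∈ S j, ∀ y' ∈ S j, W x y = W x' y'

open Classical in
/-- A testable graphon functional: its value can be estimated from `W`-random graphs. -/
def TestableFunctional (f : (ℝ → ℝ → ℝ) → ℝ) : Prop :=
  ∃ g : ∀ n : ℕ, SimpleGraph (Fin n) → ℝ,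
    (∀ (n : ℕ) (G H : SimpleGraph (Fin n)), Nonempty (G ≃g H) → g n G = g n H) ∧
    ∀ ε : ℝ, 0 < ε → ∃ kε : ℕ, 1 ≤ kε ∧ ∀ k, kε ≤ k → ∀ W, IsGraphon W →
      (∑ F : SimpleGraph (Fin k), if ε < |f W - g k F| then indDensity F W else 0) < 1 / 3

/-! With `A = {U ≤ W}`, the `L¹` norm of `W - U` equals the signed integral
`∫_A (W - U) - ∫_{Aᶜ} (W - U)`, and the same signed integral of `Wₙ - Uₙ` is at most
`‖Wₙ - Uₙ‖₁`. So it suffices that, for a fixed measurable `A ⊆ [0,1]²`, the integral over `A`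
is continuous in the cut norm on kernels bounded by `1`. If `A` lies in the algebra of sets
generated by rectangles, its indicator is a linear combination of indicators of rectangles,
so `|∫_A V| ≤ K ‖V‖_□`; a general `A` is approximated in measure by such sets. -/

open Set Function
open scoped symmDiff

theorem indicator_one_mem_span_of_mem_generateSetAlgebra {α : Type*} {C : Set (Set α)}
    (hC : IsPiSystem C) (huniv : univ ∈ C) {B : Set α} (hB : B ∈ generateSetAlgebra C) :
    B.indicator (1 : α → ℝ) ∈ Submodule.span ℝ ((fun s => s.indicator 1) '' C) := by
  set M := Submodule.span ℝ ((fun s => s.indicator (1 : α → ℝ)) '' C)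
  have hmul : M * M ≤ M := by
    rw [Submodule.span_mul_span, Submodule.span_le]
    rintro _ ⟨_, ⟨s, hs, rfl⟩, _, ⟨t, ht, rfl⟩, rfl⟩
    change s.indicator 1 * t.indicator 1 ∈ M
    rw [← inter_indicator_one]
    rcases (s ∩ t).eq_empty_or_nonempty with hst | hst
    · rw [hst, indicator_empty]
      exact M.zero_mem
    · exact Submodule.subset_span ⟨s ∩ t, hC s hs t ht hst, rfl⟩
  induction hB with
  | base s hs => exact Submodule.subset_span ⟨s, hs, rfl⟩
  | empty =>
    rw [indicator_empty]
    exact M.zero_mem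
  | compl s _ ih =>
    have huniv' : univ.indicator (1 : α → ℝ) ∈ M := Submodule.subset_span ⟨univ, huniv, rfl⟩
    have h := M.sub_mem huniv' ih
    rwa [indicator_univ, ← indicator_compl] at h
  | union s t _ _ ihs iht =>
    rw [← add_sub_cancel_right ((s ∪ t).indicator (1 : α → ℝ)) ((s ∩ t).indicator 1),
      indicator_union_add_inter, inter_indicator_one]
    exact M.sub_mem (M.add_mem ihs iht) (hmul (Submodule.mul_mem_mul ihs iht))

section SpanBound

variable {α : Type*} [MeasurableSpace α] {μ : Measure α} {C : Set (Set α)}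

theorem exists_abs_integral_mul_le_of_mem_span (hC : ∀ s ∈ C, MeasurableSet s) {g : α → ℝ}
    (hg : g ∈ Submodule.span ℝ ((fun s => s.indicator 1) '' C)) :
    ∃ K, ∀ f : α → ℝ, Integrable f μ → ∀ M, (∀ s ∈ C, |∫ x in s, f x ∂μ| ≤ M) →
      Integrable (fun x => g x * f x) μ ∧ |∫ x, g x * f x ∂μ| ≤ K * M := by
  induction hg using Submodule.span_induction with
  | mem _ h =>
    obtain ⟨s, hs, rfl⟩ := h
    refine ⟨1, fun f hf M hM => ?_⟩
    simp only [← indicator_mul_left, one_mul, Pi.one_apply]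
    rw [integral_indicator (hC s hs)]
    exact ⟨hf.indicator (hC s hs), hM s hs⟩
  | zero => exact ⟨0, fun f _ M _ => by simp⟩
  | add g₁ g₂ _ _ ih₁ ih₂ =>
    obtain ⟨K₁, hK₁⟩ := ih₁
    obtain ⟨K₂, hK₂⟩ := ih₂
    refine ⟨K₁ + K₂, fun f hf M hM => ?_⟩
    obtain ⟨hi₁, hb₁⟩ := hK₁ f hf M hM
    obtain ⟨hi₂, hb₂⟩ := hK₂ f hf M hM
    simp only [Pi.add_apply, add_mul]
    rw [integral_add hi₁ hi₂]
    exact ⟨hi₁.add hi₂, (abs_add_le _ _).trans (add_le_add hb₁ hb₂)⟩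
  | smul a g _ ih =>
    obtain ⟨K, hK⟩ := ih
    refine ⟨|a| * K, fun f hf M hM => ?_⟩
    obtain ⟨hi, hb⟩ := hK f hf M hM
    simp only [Pi.smul_apply, smul_eq_mul, mul_assoc]
    rw [integral_const_mul, abs_mul]
    exact ⟨hi.const_mul a, mul_le_mul_of_nonneg_left hb (abs_nonneg a)⟩

theorem exists_abs_setIntegral_le_of_mem_generateSetAlgebra (hC : IsPiSystem C)
    (huniv : univ ∈ C) (hCm : ∀ s ∈ C, MeasurableSet s) {B : Set α}
    (hB : B ∈ generateSetAlgebra C) :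
    ∃ K, ∀ f : α → ℝ, Integrable f μ → ∀ M, (∀ s ∈ C, |∫ x in s, f x ∂μ| ≤ M) →
      |∫ x in B, f x ∂μ| ≤ K * M := by
  obtain ⟨K, hK⟩ := exists_abs_integral_mul_le_of_mem_span (μ := μ) hCm
    (indicator_one_mem_span_of_mem_generateSetAlgebra hC huniv hB)
  refine ⟨K, fun f hf M hM => ?_⟩
  have hBm : MeasurableSet B := by
    refine MeasurableSpace.generateFrom_le hCm B ?_
    rw [← generateFrom_generateSetAlgebra_eq]
    exact MeasurableSpace.measurableSet_generateFrom hB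
  have h := (hK f hf M hM).2
  simp only [← indicator_mul_left, one_mul, Pi.one_apply] at h
  rwa [integral_indicator hBm] at h

end SpanBound

section SetIntegral

variable {α : Type*} [MeasurableSpace α] {μ : Measure α} {f : α → ℝ} {s : Set α} {c : ℝ}

theorem abs_setIntegral_le_mul_measureReal [IsFiniteMeasure μ] (hb : ∀ x, |f x| ≤ c)
    (s : Set α) : |∫ x in s, f x ∂μ| ≤ c * μ.real s := by
  simpa only [Real.norm_eq_abs] using norm_setIntegral_le_of_norm_le_const (f := f)
    (measure_lt_top μ s) fun x _ => (Real.norm_eq_abs (f x)).trans_le (hb x)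

theorem abs_setIntegral_le_of_abs_le [IsProbabilityMeasure μ] (hb : ∀ x, |f x| ≤ c)
    (s : Set α) : |∫ x in s, f x ∂μ| ≤ c := by
  have hc : 0 ≤ c := (abs_nonneg _).trans (hb (nonempty_of_isProbabilityMeasure μ).some)
  exact (abs_setIntegral_le_mul_measureReal hb s).trans
    (mul_le_of_le_one_right hc measureReal_le_one)

theorem abs_setIntegral_sub_setIntegral_le [IsFiniteMeasure μ] (hf : Integrable f μ)
    (hb : ∀ x, |f x| ≤ c) {t : Set α} (hs : MeasurableSet s) (ht : MeasurableSet t) :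
    |∫ x in s, f x ∂μ - ∫ x in t, f x ∂μ| ≤ c * μ.real (s ∆ t) := by
  have hs' := integral_inter_add_sdiff ht (hf.integrableOn (s := s))
  have ht' := integral_inter_add_sdiff hs (hf.integrableOn (s := t))
  rw [inter_comm] at ht'
  rw [show ∫ x in s, f x ∂μ - ∫ x in t, f x ∂μ = ∫ x in s \ t, f x ∂μ - ∫ x in t \ s, f x ∂μ
    by linarith, Set.symmDiff_def, measureReal_union disjoint_sdiff_sdiff (ht.diff hs), mul_add]
  exact (abs_sub _ _).trans (add_le_add (abs_setIntegral_le_mul_measureReal hb _)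
    (abs_setIntegral_le_mul_measureReal hb _))

theorem setIntegral_sub_setIntegral_compl_le_integral_abs (hf : Integrable f μ)
    (hs : MeasurableSet s) : ∫ x in s, f x ∂μ - ∫ x in sᶜ, f x ∂μ ≤ ∫ x, |f x| ∂μ := by
  rw [← integral_add_compl hs hf.abs, sub_eq_add_neg, ← integral_neg]
  exact add_le_add (integral_mono hf.integrableOn hf.abs.integrableOn fun x => le_abs_self _)
    (integral_mono hf.neg.integrableOn hf.abs.integrableOn fun x => neg_le_abs _)

theorem integral_abs_eq_setIntegral_sub_setIntegral_compl (hf : Integrable f μ)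
    (hs : MeasurableSet s) (hpos : ∀ x ∈ s, 0 ≤ f x) (hneg : ∀ x ∉ s, f x ≤ 0) :
    ∫ x, |f x| ∂μ = ∫ x in s, f x ∂μ - ∫ x in sᶜ, f x ∂μ := by
  rw [← integral_add_compl hs hf.abs,
    setIntegral_congr_fun hs fun x hx => abs_of_nonneg (hpos x hx),
    setIntegral_congr_fun hs.compl fun x hx => abs_of_nonpos (hneg x hx), integral_neg,
    sub_eq_add_neg]

end SetIntegral

def volI : Measure ℝ := volume.restrict I01

instance : IsProbabilityMeasure volI := ⟨by simp [volI, I01]⟩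

local notation "volI²" => volI.prod volI

section CutNorm

variable {V : ℝ → ℝ → ℝ} {c : ℝ}

theorem integrable_kernel_of_abs_le (hV : Measurable (uncurry V)) (hb : ∀ x y, |V x y| ≤ c) :
    Integrable (fun p => V p.1 p.2) volI² :=
  .of_bound hV.aestronglyMeasurable c (.of_forall fun p => hb p.1 p.2)

theorem setIntegral_prod_eq_integral_inter_I01 (hV : Integrable (fun p => V p.1 p.2) volI²)
    {S T : Set ℝ} (hS : MeasurableSet S) (hT : MeasurableSet T) :
    ∫ p in S ×ˢ T, V p.1 p.2 ∂volI² = ∫ x in S ∩ I01, ∫ y in T ∩ I01, V x y := by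
  have hST := hV.integrableOn (s := S ×ˢ T)
  rw [IntegrableOn, ← Measure.prod_restrict] at hST
  rw [← Measure.prod_restrict, integral_prod _ hST]
  simp only [volI, Measure.restrict_restrict hS, Measure.restrict_restrict hT]

theorem l1Norm_eq_integral (hV : Measurable (uncurry V)) (hb : ∀ x y, |V x y| ≤ c) :
    l1Norm V = ∫ p, |V p.1 p.2| ∂volI² := by
  have h := setIntegral_prod_eq_integral_inter_I01 (V := fun x y => |V x y|)
    (integrable_kernel_of_abs_le hV hb).abs .univ .univ
  simp only [univ_prod_univ, Measure.restrict_univ, univ_inter] at h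
  exact h.symm

theorem l1Norm_le (hV : Measurable (uncurry V)) (hb : ∀ x y, |V x y| ≤ c) : l1Norm V ≤ c := by
  have h := abs_setIntegral_le_of_abs_le (μ := volI²) (f := fun p : ℝ × ℝ => |V p.1 p.2|)
    (fun p => (abs_abs _).trans_le (hb p.1 p.2)) univ
  rw [Measure.restrict_univ] at h
  exact (l1Norm_eq_integral hV hb).trans_le ((le_abs_self _).trans h)

theorem abs_setIntegral_prod_le_cutNorm (hV : Measurable (uncurry V)) (hb : ∀ x y, |V x y| ≤ c)
    {S T : Set ℝ} (hS : MeasurableSet S) (hT : MeasurableSet T) :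
    |∫ p in S ×ˢ T, V p.1 p.2 ∂volI²| ≤ cutNorm V := by
  have hV' := integrable_kernel_of_abs_le hV hb
  refine le_csSup ⟨c, ?_⟩ ⟨S ∩ I01, T ∩ I01, hS.inter measurableSet_Icc,
    hT.inter measurableSet_Icc, inter_subset_right, inter_subset_right,
    by rw [setIntegral_prod_eq_integral_inter_I01 hV' hS hT]⟩
  rintro _ ⟨S', T', hS', hT', hS'I, hT'I, rfl⟩
  rw [← inter_eq_left.2 hS'I, ← inter_eq_left.2 hT'I,
    ← setIntegral_prod_eq_integral_inter_I01 hV' hS' hT']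
  exact abs_setIntegral_le_of_abs_le (f := fun p : ℝ × ℝ => V p.1 p.2) (fun p => hb p.1 p.2) _

end CutNorm

theorem exists_abs_setIntegral_le_mul_cutNorm_add {A : Set (ℝ × ℝ)} (hA : MeasurableSet A)
    {ε : ℝ} (hε : 0 < ε) :
    ∃ K, ∀ V : ℝ → ℝ → ℝ, Measurable (uncurry V) → (∀ x y, |V x y| ≤ 1) →
      |∫ p in A, V p.1 p.2 ∂volI²| ≤ K * cutNorm V + ε := by
  have hdense : volI².MeasureDense (generateSetAlgebra (image2 (· ×ˢ ·)
      {s : Set ℝ | MeasurableSet s} {t : Set ℝ | MeasurableSet t})) :=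
    .of_generateFrom_isSetAlgebra_finite _ isSetAlgebra_generateSetAlgebra
      (by rw [generateFrom_generateSetAlgebra_eq, generateFrom_prod])
  obtain ⟨B, hB, hAB⟩ := hdense.approx A hA (measure_ne_top _ _) ε hε
  obtain ⟨K, hK⟩ := exists_abs_setIntegral_le_of_mem_generateSetAlgebra (μ := volI²)
    isPiSystem_prod ⟨univ, mem_ofPred.2 .univ, univ, mem_ofPred.2 .univ, univ_prod_univ⟩
    (by rintro _ ⟨S, hS, T, hT, rfl⟩; exact MeasurableSet.prod hS hT) hB
  refine ⟨K, fun V hV hb => ?_⟩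
  have hVi := integrable_kernel_of_abs_le hV hb
  have hdiff := abs_setIntegral_sub_setIntegral_le hVi (fun p => hb p.1 p.2) hA
    (hdense.measurable B hB)
  have hBbound := hK _ hVi (cutNorm V) fun _ ⟨S, hS, T, hT, hST⟩ =>
    hST ▸ abs_setIntegral_prod_le_cutNorm hV hb hS hT
  have hABε : volI².real (A ∆ B) < ε := ENNReal.toReal_lt_of_lt_ofReal hAB
  linarith [abs_sub_abs_le_abs_sub (∫ p in A, V p.1 p.2 ∂volI²) (∫ p in B, V p.1 p.2 ∂volI²)]

theorem tendsto_setIntegral_of_tendsto_cutNorm {ι : Type*} {l : Filter ι}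
    {V : ι → ℝ → ℝ → ℝ} (hV : ∀ n, Measurable (uncurry (V n))) (hb : ∀ n x y, |V n x y| ≤ 1)
    (hcut : Tendsto (fun n => cutNorm (V n)) l (𝓝 0)) {A : Set (ℝ × ℝ)} (hA : MeasurableSet A) :
    Tendsto (fun n => ∫ p in A, V n p.1 p.2 ∂volI²) l (𝓝 0) := by
  rw [Metric.tendsto_nhds]
  intro ε hε
  obtain ⟨K, hK⟩ := exists_abs_setIntegral_le_mul_cutNorm_add hA (half_pos hε)
  have hsmall : ∀ᶠ n in l, K * cutNorm (V n) < ε / 2 := by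
    have hKcut := hcut.const_mul K
    rw [mul_zero] at hKcut
    exact hKcut.eventually_lt_const (half_pos hε)
  filter_upwards [hsmall] with n hn
  rw [Real.dist_0_eq_abs]
  linarith [hK (V n) (hV n) (hb n)]

theorem IsGraphon.abs_sub_le_one {W U : ℝ → ℝ → ℝ} (hW : IsGraphon W) (hU : IsGraphon U)
    (x y : ℝ) : |W x y - U x y| ≤ 1 := by
  obtain ⟨hW0, hW1⟩ := hW.2.2 x y
  obtain ⟨hU0, hU1⟩ := hU.2.2 x y
  exact abs_le.2 ⟨by linarith, by linarith⟩

theorem IsGraphon.measurable_sub {W U : ℝ → ℝ → ℝ} (hW : IsGraphon W) (hU : IsGraphon U) :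
    Measurable (uncurry fun x y => W x y - U x y) :=
  hW.1.sub hU.1

theorem tendsto_setIntegral_sub_of_tendsto_cutNorm {ι : Type*} {l : Filter ι}
    {U W : ℝ → ℝ → ℝ} {Useq Wseq : ι → ℝ → ℝ → ℝ} (hU : IsGraphon U) (hW : IsGraphon W)
    (hUseq : ∀ n, IsGraphon (Useq n)) (hWseq : ∀ n, IsGraphon (Wseq n))
    (hUconv : Tendsto (fun n => cutNorm fun x y => Useq n x y - U x y) l (𝓝 0))
    (hWconv : Tendsto (fun n => cutNorm fun x y => Wseq n x y - W x y) l (𝓝 0))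
    {A : Set (ℝ × ℝ)} (hA : MeasurableSet A) :
    Tendsto (fun n => ∫ p in A, Wseq n p.1 p.2 - Useq n p.1 p.2 ∂volI²) l
      (𝓝 (∫ p in A, W p.1 p.2 - U p.1 p.2 ∂volI²)) := by
  have hWU := integrable_kernel_of_abs_le (hW.measurable_sub hU) (hW.abs_sub_le_one hU)
  have hWn n := integrable_kernel_of_abs_le ((hWseq n).measurable_sub hW)
    ((hWseq n).abs_sub_le_one hW)
  have hUn n := integrable_kernel_of_abs_le ((hUseq n).measurable_sub hU)
    ((hUseq n).abs_sub_le_one hU)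
  have hsplit : ∀ n, ∫ p in A, Wseq n p.1 p.2 - Useq n p.1 p.2 ∂volI² =
      ∫ p in A, W p.1 p.2 - U p.1 p.2 ∂volI² + ∫ p in A, Wseq n p.1 p.2 - W p.1 p.2 ∂volI²
        - ∫ p in A, Useq n p.1 p.2 - U p.1 p.2 ∂volI² := fun n => by
    rw [← integral_add hWU.integrableOn (hWn n).integrableOn,
      ← integral_sub ?_ (hUn n).integrableOn]
    · congr 1
      ext p
      ring
    · exact (hWU.add (hWn n)).integrableOn
  have hW' := tendsto_setIntegral_of_tendsto_cutNorm (fun n => (hWseq n).measurable_sub hW)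
    (fun n => (hWseq n).abs_sub_le_one hW) hWconv hA
  have hU' := tendsto_setIntegral_of_tendsto_cutNorm (fun n => (hUseq n).measurable_sub hU)
    (fun n => (hUseq n).abs_sub_le_one hU) hUconv hA
  simpa only [hsplit, add_zero, sub_zero] using (tendsto_const_nhds.add hW').sub hU'

theorem liminf_l1_ge_of_cut_tendsto
    (U W : ℝ → ℝ → ℝ) (Useq Wseq : ℕ → ℝ → ℝ → ℝ)
    (hU : IsGraphon U) (hW : IsGraphon W)
    (hUseq : ∀ n, IsGraphon (Useq n)) (hWseq : ∀ n, IsGraphon (Wseq n))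
    (hUconv : Tendsto (fun n => cutNorm fun x y => Useq n x y - U x y) atTop (nhds 0))
    (hWconv : Tendsto (fun n => cutNorm fun x y => Wseq n x y - W x y) atTop (nhds 0)) :
    l1Norm (fun x y => W x y - U x y) ≤
      Filter.liminf (fun n => l1Norm fun x y => Wseq n x y - Useq n x y) atTop := by
  set A : Set (ℝ × ℝ) := {p | U p.1 p.2 ≤ W p.1 p.2}
  have hA : MeasurableSet A := measurableSet_le hU.1 hW.1
  have hconv {S} (hS : MeasurableSet S) :=
    tendsto_setIntegral_sub_of_tendsto_cutNorm hU hW hUseq hWseq hUconv hWconv hS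
  have hlim := (hconv hA).sub (hconv hA.compl)
  have hl1 {W U : ℝ → ℝ → ℝ} (hW : IsGraphon W) (hU : IsGraphon U) :=
    l1Norm_eq_integral (hW.measurable_sub hU) (hW.abs_sub_le_one hU)
  have hint {W U : ℝ → ℝ → ℝ} (hW : IsGraphon W) (hU : IsGraphon U) :=
    integrable_kernel_of_abs_le (hW.measurable_sub hU) (hW.abs_sub_le_one hU)
  rw [hl1 hW hU, integral_abs_eq_setIntegral_sub_setIntegral_compl (hint hW hU) hA
    (fun p hp => sub_nonneg.2 hp) (fun p hp => (sub_neg.2 (not_le.1 hp)).le), ← hlim.liminf_eq]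
  refine liminf_le_liminf (.of_forall fun n => ?_) hlim.isBoundedUnder_ge ?_
  · rw [hl1 (hWseq n) (hUseq n)]
    exact setIntegral_sub_setIntegral_compl_le_integral_abs (hint (hWseq n) (hUseq n)) hA
  · exact (isBoundedUnder_of ⟨1, fun n => l1Norm_le ((hWseq n).measurable_sub (hUseq n))
      ((hWseq n).abs_sub_le_one (hUseq n))⟩).isCoboundedUnder_ge

end
end

section
/- Suppose U ∈ W₀ and (Uₙ) is a sequence in W₀ with ‖Uₙ − U‖_□ → 0 as n → ∞. Then for every W ∈ W₀ there exists a sequence (Wₙ) in W₀ such that ‖Wₙ − W‖_□ → 0 and ‖Uₙ − Wₙ‖₁ → ‖U − W‖₁ as n → ∞. -/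
open MeasureTheory Filter Topology
open scoped ENNReal

noncomputable section

/-!
Put `W_n := U_n W / U` where `W ≤ U` and `W_n := 1 - (1 - U_n)(1 - W) / (1 - U)` where `W > U`.
Then `W_n` is a graphon lying on the same side of `U_n` as `W` does of `U`, and both
`W_n - W` and `|U_n - W_n| - |U - W|` have the form `m * (U_n - U)` for a bounded kernel `m`
depending only on `U` and `W`. So it suffices that multiplying by a fixed integrable `m`
preserves uniform smallness of the rectangle integrals of uniformly bounded kernels: for
indicators of rectangles this is immediate, a Dynkin system argument extends it to indicators
of measurable sets, and `L¹`-approximation to all integrable `m`. Taking the whole square as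
the rectangle gives `‖U_n - W_n‖₁ - ‖U - W‖₁ = ∫ m (U_n - U) → 0`.
-/

theorem Set.abs_indicator_iUnion_sub_indicator_biUnion_le {X : Type*} (f : ℕ → Set X)
    {g : X → ℝ} {C : ℝ} (hg : ∀ x, |g x| ≤ C) (N : ℕ) (x : X) :
    |(⋃ j, f j).indicator g x - (⋃ j ∈ Finset.range N, f j).indicator g x|
      ≤ (⋃ j ≥ N, f j).indicator (fun _ => C) x := by
  have hC : 0 ≤ C := (abs_nonneg _).trans (hg x)
  by_cases hxN : x ∈ ⋃ j ∈ Finset.range N, f j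
  · have hx : x ∈ ⋃ j, f j := by
      obtain ⟨j, -, hj⟩ := Set.mem_iUnion₂.1 hxN
      exact Set.mem_iUnion.2 ⟨j, hj⟩
    rw [Set.indicator_of_mem hx, Set.indicator_of_mem hxN, sub_self, abs_zero]
    exact Set.indicator_nonneg (fun _ _ => hC) x
  by_cases hx : x ∈ ⋃ j, f j
  · obtain ⟨j, hj⟩ := Set.mem_iUnion.1 hx
    have hjN : N ≤ j := by
      by_contra hjN
      exact hxN (Set.mem_iUnion₂.2 ⟨j, Finset.mem_range.2 (by omega), hj⟩)
    rw [Set.indicator_of_mem hx, Set.indicator_of_notMem hxN,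
      Set.indicator_of_mem (Set.mem_iUnion₂.2 ⟨j, hjN, hj⟩), sub_zero]
    exact hg x
  · rw [Set.indicator_of_notMem hx, Set.indicator_of_notMem hxN, sub_zero, abs_zero]
    exact Set.indicator_nonneg (fun _ _ => hC) x

section RectangleIntegrals

variable {α β ι : Type*} [MeasurableSpace α] [MeasurableSpace β] {ρ : Measure (α × β)}
  {l : Filter ι}

def TendstoCutZero (ρ : Measure (α × β)) (l : Filter ι) (F : ι → α × β → ℝ) : Prop :=
  ∀ ε > 0, ∀ᶠ i in l, ∀ s t, MeasurableSet s → MeasurableSet t →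
    |∫ p in s ×ˢ t, F i p ∂ρ| ≤ ε

namespace TendstoCutZero

theorem zero : TendstoCutZero ρ l fun _ _ => 0 := by
  intro ε hε
  filter_upwards with i s t _ _
  simp [hε.le]

theorem tendsto_integral {F : ι → α × β → ℝ} (hF : TendstoCutZero ρ l F) :
    Tendsto (fun i => ∫ p, F i p ∂ρ) l (𝓝 0) := by
  refine Metric.tendsto_nhds.2 fun ε hε => ?_
  filter_upwards [hF (ε / 2) (half_pos hε)] with i hi
  have := hi Set.univ Set.univ MeasurableSet.univ MeasurableSet.univ
  rw [Set.univ_prod_univ, Measure.restrict_univ] at this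
  rw [Real.dist_eq, sub_zero]
  linarith

theorem add {F G : ι → α × β → ℝ} (hF : TendstoCutZero ρ l F) (hG : TendstoCutZero ρ l G)
    (hFi : ∀ i, Integrable (F i) ρ) (hGi : ∀ i, Integrable (G i) ρ) :
    TendstoCutZero ρ l fun i p => F i p + G i p := by
  intro ε hε
  filter_upwards [hF (ε / 2) (half_pos hε), hG (ε / 2) (half_pos hε)] with i hFε hGε s t hs ht
  rw [integral_add (hFi i).integrableOn (hGi i).integrableOn]
  linarith [abs_add_le (∫ p in s ×ˢ t, F i p ∂ρ) (∫ p in s ×ˢ t, G i p ∂ρ), hFε s t hs ht,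
    hGε s t hs ht]

theorem sub {F G : ι → α × β → ℝ} (hF : TendstoCutZero ρ l F) (hG : TendstoCutZero ρ l G)
    (hFi : ∀ i, Integrable (F i) ρ) (hGi : ∀ i, Integrable (G i) ρ) :
    TendstoCutZero ρ l fun i p => F i p - G i p := by
  intro ε hε
  filter_upwards [hF (ε / 2) (half_pos hε), hG (ε / 2) (half_pos hε)] with i hFε hGε s t hs ht
  rw [integral_sub (hFi i).integrableOn (hGi i).integrableOn]
  linarith [abs_sub (∫ p in s ×ˢ t, F i p ∂ρ) (∫ p in s ×ˢ t, G i p ∂ρ), hFε s t hs ht,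
    hGε s t hs ht]

theorem const_mul {F : ι → α × β → ℝ} (hF : TendstoCutZero ρ l F) (c : ℝ) :
    TendstoCutZero ρ l fun i p => c * F i p := by
  intro ε hε
  filter_upwards [hF (ε / (|c| + 1)) (by positivity)] with i hi s t hs ht
  rw [integral_const_mul, abs_mul]
  calc |c| * |∫ p in s ×ˢ t, F i p ∂ρ| ≤ |c| * (ε / (|c| + 1)) := by gcongr; exact hi s t hs ht
    _ ≤ ε := by
      rw [mul_div_assoc', div_le_iff₀ (by positivity)]
      nlinarith [abs_nonneg c]

theorem finsetSum {κ : Type*} (S : Finset κ) {F : κ → ι → α × β → ℝ}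
    (hF : ∀ k ∈ S, TendstoCutZero ρ l (F k)) (hFi : ∀ k ∈ S, ∀ i, Integrable (F k i) ρ) :
    TendstoCutZero ρ l fun i p => ∑ k ∈ S, F k i p := by
  classical
  induction S using Finset.induction_on with
  | empty => simpa using zero
  | insert k S hk ih =>
    simp only [Finset.sum_insert hk]
    refine (hF k (Finset.mem_insert_self k S)).add
      (ih (fun j hj => hF j (Finset.mem_insert_of_mem hj))
        (fun j hj => hFi j (Finset.mem_insert_of_mem hj)))
      (hFi k (Finset.mem_insert_self k S)) fun i => ?_
    exact integrable_finsetSum S fun j hj => hFi j (Finset.mem_insert_of_mem hj) i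

theorem of_approx {F : ι → α × β → ℝ} {G : ℕ → ι → α × β → ℝ} {δ : ℕ → ℝ}
    (hF : ∀ i, Integrable (F i) ρ) (hG : ∀ k i, Integrable (G k i) ρ)
    (hGk : ∀ k, TendstoCutZero ρ l (G k)) (hFG : ∀ k i, ∫ p, |F i p - G k i p| ∂ρ ≤ δ k)
    (hδ : Tendsto δ atTop (𝓝 0)) : TendstoCutZero ρ l F := by
  intro ε hε
  obtain ⟨k, hk⟩ := (hδ.eventually (gt_mem_nhds (half_pos hε))).exists
  filter_upwards [hGk k (ε / 2) (half_pos hε)] with i hi s t hs ht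
  have hsplit : ∫ p in s ×ˢ t, F i p ∂ρ
      = ∫ p in s ×ˢ t, (F i p - G k i p) ∂ρ + ∫ p in s ×ˢ t, G k i p ∂ρ := by
    rw [integral_sub (hF i).integrableOn (hG k i).integrableOn, sub_add_cancel]
  have hdiff : |∫ p in s ×ˢ t, (F i p - G k i p) ∂ρ| ≤ δ k :=
    calc |∫ p in s ×ˢ t, (F i p - G k i p) ∂ρ| ≤ ∫ p in s ×ˢ t, |F i p - G k i p| ∂ρ :=
          abs_integral_le_integral_abs
      _ ≤ ∫ p, |F i p - G k i p| ∂ρ :=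
          setIntegral_le_integral ((hF i).sub (hG k i)).abs (ae_of_all _ fun _ => abs_nonneg _)
      _ ≤ δ k := hFG k i
  rw [hsplit]
  linarith [abs_add_le (∫ p in s ×ˢ t, (F i p - G k i p) ∂ρ) (∫ p in s ×ˢ t, G k i p ∂ρ),
    hi s t hs ht]

theorem indicator_iUnion [IsFiniteMeasure ρ] {h : ι → α × β → ℝ} {C : ℝ}
    (hh_int : ∀ i, Integrable (h i) ρ) (hb : ∀ i p, |h i p| ≤ C) {f : ℕ → Set (α × β)}
    (hdisj : Pairwise fun j k => Disjoint (f j) (f k)) (hfm : ∀ j, MeasurableSet (f j))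
    (hf : ∀ j, TendstoCutZero ρ l fun i => (f j).indicator (h i)) :
    TendstoCutZero ρ l fun i => (⋃ j, f j).indicator (h i) := by
  have hpartial (N : ℕ) :
      TendstoCutZero ρ l fun i => (⋃ j ∈ Finset.range N, f j).indicator (h i) := by
    simp only [Finset.indicator_biUnion _ _ (hdisj.set_pairwise _)]
    exact finsetSum _ (fun j _ => hf j) fun j _ i => (hh_int i).indicator (hfm j)
  have htail : Tendsto (fun N => C * ρ.real (⋃ j ≥ N, f j)) atTop (𝓝 0) := by
    simpa [measureReal_def] using ((ENNReal.tendsto_toReal ENNReal.zero_ne_top).comp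
      (tendsto_measure_biUnion_Ici_zero_of_pairwise_disjoint
        (fun j => (hfm j).nullMeasurableSet) hdisj)).const_mul C
  refine of_approx (fun i => (hh_int i).indicator (MeasurableSet.iUnion hfm))
    (fun N i => (hh_int i).indicator (Finset.measurableSet_biUnion _ fun j _ => hfm j))
    hpartial (fun N i => ?_) htail
  have hT : MeasurableSet (⋃ j ≥ N, f j) :=
    MeasurableSet.biUnion (Set.to_countable _) fun j _ => hfm j
  calc ∫ p, |(⋃ j, f j).indicator (h i) p - (⋃ j ∈ Finset.range N, f j).indicator (h i) p| ∂ρ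
      ≤ ∫ p, (⋃ j ≥ N, f j).indicator (fun _ => C) p ∂ρ :=
        integral_mono_of_nonneg (ae_of_all _ fun _ => abs_nonneg _)
          ((integrable_const C).indicator hT)
          (ae_of_all _ (Set.abs_indicator_iUnion_sub_indicator_biUnion_le f (hb i) N))
    _ = C * ρ.real (⋃ j ≥ N, f j) := by rw [integral_indicator_const C hT, smul_eq_mul, mul_comm]

theorem indicator [IsFiniteMeasure ρ] {h : ι → α × β → ℝ} {C : ℝ}
    (hh : TendstoCutZero ρ l h) (hmeas : ∀ i, AEStronglyMeasurable (h i) ρ)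
    (hb : ∀ i p, |h i p| ≤ C) {E : Set (α × β)} (hE : MeasurableSet E) :
    TendstoCutZero ρ l fun i => E.indicator (h i) := by
  have hh_int : ∀ i, Integrable (h i) ρ := fun i =>
    Integrable.of_bound (hmeas i) C (ae_of_all _ fun p => (Real.norm_eq_abs _).trans_le (hb i p))
  induction E, hE using MeasurableSpace.induction_on_inter generateFrom_prod.symm
    isPiSystem_prod with
  | empty => simpa using zero
  | basic _ hAB =>
    obtain ⟨A, hA, B, hB, rfl⟩ := hAB
    intro ε hε
    filter_upwards [hh ε hε] with i hi s t hs ht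
    rw [setIntegral_indicator (MeasurableSet.prod hA hB), Set.prod_inter_prod]
    exact hi _ _ (hs.inter hA) (ht.inter hB)
  | compl E hE hEh =>
    simp only [Set.indicator_compl]
    exact hh.sub hEh hh_int fun i => (hh_int i).indicator hE
  | iUnion f hdisj hfm hf => exact indicator_iUnion hh_int hb hdisj hfm hf

theorem mul_left [IsFiniteMeasure ρ] {h : ι → α × β → ℝ} {C : ℝ}
    (hh : TendstoCutZero ρ l h) (hmeas : ∀ i, AEStronglyMeasurable (h i) ρ)
    (hb : ∀ i p, |h i p| ≤ C) {m : α × β → ℝ} (hm : Integrable m ρ) :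
    TendstoCutZero ρ l fun i p => m p * h i p := by
  have hmul_int : ∀ {g : α × β → ℝ}, Integrable g ρ → ∀ i, Integrable (fun p => g p * h i p) ρ :=
    fun hg i => hg.mul_bdd (hmeas i) (ae_of_all _ fun p => (Real.norm_eq_abs _).trans_le (hb i p))
  refine Integrable.induction (fun m => TendstoCutZero ρ l fun i p => m p * h i p)
    ?indicator ?add ?closed ?congr hm
  case indicator =>
    intro c s hs _
    convert (hh.indicator hmeas hb hs).const_mul c using 3 with i p
    by_cases hp : p ∈ s <;> simp [hp]
  case add =>
    intro f g _ hf hg hPf hPg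
    simpa only [Pi.add_apply, add_mul] using hPf.add hPg (hmul_int hf) (hmul_int hg)
  case closed =>
    refine isSeqClosed_iff_isClosed.1 fun g f hg hlim => ?_
    refine of_approx (hmul_int (L1.integrable_coeFn f))
      (fun k => hmul_int (L1.integrable_coeFn (g k)))
      hg (δ := fun k => C * dist f (g k)) (fun k i => ?_) ?_
    · rw [L1.dist_eq_integral_dist, ← integral_const_mul]
      refine integral_mono_of_nonneg (ae_of_all _ fun _ => abs_nonneg _)
        (((L1.integrable_coeFn f).sub (L1.integrable_coeFn (g k))).abs.const_mul C |>.congr ?_)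
        (ae_of_all _ fun p => ?_)
      · exact ae_of_all _ fun p => by simp [Real.dist_eq]
      · dsimp only
        rw [← sub_mul, abs_mul, mul_comm, Real.dist_eq]
        exact mul_le_mul_of_nonneg_right (hb i p) (abs_nonneg _)
    · simpa using ((tendsto_iff_dist_tendsto_zero.1 hlim).congr fun k => dist_comm _ _).const_mul C
  case congr =>
    intro f g hfg _ hPf ε hε
    filter_upwards [hPf ε hε] with i hi s t hs ht
    have hfgh : (fun p => f p * h i p) =ᵐ[ρ.restrict (s ×ˢ t)] fun p => g p * h i p :=
      ae_restrict_of_ae (hfg.mono fun p hp => by simp only [hp])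
    rw [← integral_congr_ae hfgh]
    exact hi s t hs ht

end TendstoCutZero

end RectangleIntegrals

def unitSqMeasure : Measure (ℝ × ℝ) := (volume.restrict I01).prod (volume.restrict I01)

instance : IsFiniteMeasure (volume.restrict I01) :=
  isFiniteMeasure_restrict.2 measure_Icc_lt_top.ne

instance : IsFiniteMeasure unitSqMeasure := by
  unfold unitSqMeasure
  infer_instance

section UnitSquare

variable {f : ℝ → ℝ → ℝ}

theorem setIntegral_unitSqMeasure_prod (hf : Integrable (Function.uncurry f) unitSqMeasure)
    {A B : Set ℝ} (hA : MeasurableSet A) (hB : MeasurableSet B) :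
    ∫ p in A ×ˢ B, Function.uncurry f p ∂unitSqMeasure = ∫ x in A ∩ I01, ∫ y in B ∩ I01, f x y := by
  have hrestrict : unitSqMeasure.restrict (A ×ˢ B)
      = (volume.restrict (A ∩ I01)).prod (volume.restrict (B ∩ I01)) := by
    rw [unitSqMeasure, ← Measure.prod_restrict, Measure.restrict_restrict hA,
      Measure.restrict_restrict hB]
  rw [hrestrict]
  exact integral_prod _ (hrestrict ▸ hf.restrict)

theorem l1Norm_eq_integral_s3 (hf : Integrable (Function.uncurry f) unitSqMeasure) :
    l1Norm f = ∫ p, |Function.uncurry f p| ∂unitSqMeasure := by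
  have := setIntegral_unitSqMeasure_prod (f := fun x y => |f x y|) hf.abs
    MeasurableSet.univ MeasurableSet.univ
  rw [Set.univ_prod_univ, Measure.restrict_univ, Set.univ_inter] at this
  exact this.symm

theorem cutNorm_nonneg : 0 ≤ cutNorm f :=
  Real.sSup_nonneg fun _ ⟨_, _, _, _, _, _, hr⟩ => hr ▸ abs_nonneg _

theorem abs_setIntegral_le_cutNorm (hf : Integrable (Function.uncurry f) unitSqMeasure)
    {A B : Set ℝ} (hA : MeasurableSet A) (hB : MeasurableSet B) :
    |∫ p in A ×ˢ B, Function.uncurry f p ∂unitSqMeasure| ≤ cutNorm f := by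
  have hI : MeasurableSet I01 := measurableSet_Icc
  refine le_csSup ⟨∫ p, |Function.uncurry f p| ∂unitSqMeasure, ?_⟩
    ⟨A ∩ I01, B ∩ I01, hA.inter hI, hB.inter hI, Set.inter_subset_right, Set.inter_subset_right,
      by rw [setIntegral_unitSqMeasure_prod hf hA hB]⟩
  rintro _ ⟨S, T, hS, hT, hSI, hTI, rfl⟩
  rw [← Set.inter_eq_left.2 hSI, ← Set.inter_eq_left.2 hTI,
    ← setIntegral_unitSqMeasure_prod hf hS hT]
  exact abs_integral_le_integral_abs.trans
    (setIntegral_le_integral hf.abs (ae_of_all _ fun _ => abs_nonneg _))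

theorem cutNorm_le (hf : Integrable (Function.uncurry f) unitSqMeasure) {ε : ℝ} (hε : 0 ≤ ε)
    (h : ∀ A B : Set ℝ, MeasurableSet A → MeasurableSet B →
      |∫ p in A ×ˢ B, Function.uncurry f p ∂unitSqMeasure| ≤ ε) :
    cutNorm f ≤ ε := by
  refine Real.sSup_le ?_ hε
  rintro _ ⟨S, T, hS, hT, hSI, hTI, rfl⟩
  rw [← Set.inter_eq_left.2 hSI, ← Set.inter_eq_left.2 hTI,
    ← setIntegral_unitSqMeasure_prod hf hS hT]
  exact h S T hS hT

end UnitSquare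

theorem tendsto_cutNorm_zero_iff {ι : Type*} {l : Filter ι} {F : ι → ℝ → ℝ → ℝ}
    (hF : ∀ i, Integrable (Function.uncurry (F i)) unitSqMeasure) :
    Tendsto (fun i => cutNorm (F i)) l (𝓝 0) ↔
      TendstoCutZero unitSqMeasure l fun i => Function.uncurry (F i) := by
  constructor
  · intro hlim ε hε
    filter_upwards [(hlim.eventually (ge_mem_nhds hε))] with i hi A B hA hB
    exact (abs_setIntegral_le_cutNorm (hF i) hA hB).trans hi
  · intro hF0
    refine tendsto_order.2 ⟨fun a ha => Eventually.of_forall fun i => ha.trans_le cutNorm_nonneg,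
      fun a ha => ?_⟩
    filter_upwards [hF0 (a / 2) (half_pos ha)] with i hi
    exact (cutNorm_le (hF i) (half_pos ha).le hi).trans_lt (half_lt_self ha)

theorem IsGraphon.integrable {W : ℝ → ℝ → ℝ} (hW : IsGraphon W) :
    Integrable (Function.uncurry W) unitSqMeasure :=
  Integrable.of_bound hW.1.aestronglyMeasurable 1 (ae_of_all _ fun p => by
    obtain ⟨h0, h1⟩ := hW.2.2 p.1 p.2
    exact (Real.norm_eq_abs _).trans_le ((abs_of_nonneg h0).trans_le h1))

theorem IsGraphon.integrable_sub {V W : ℝ → ℝ → ℝ} (hV : IsGraphon V) (hW : IsGraphon W) :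
    Integrable (Function.uncurry fun x y => V x y - W x y) unitSqMeasure :=
  hV.integrable.sub hW.integrable

def followRatio (u w : ℝ) : ℝ := if w ≤ u then w / u else (1 - w) / (1 - u)

/-- The affine form of `un * w / u` (for `w ≤ u`) and `1 - (1 - un) * (1 - w) / (1 - u)`
(for `u < w`). -/
def follow (un u w : ℝ) : ℝ := w + (un - u) * followRatio u w

def followL1Coeff (u w : ℝ) : ℝ := if w ≤ u then 1 - followRatio u w else followRatio u w - 1

section Follow

open Set

variable {un u w : ℝ}

theorem followRatio_mem_Icc (hu : u ∈ Icc (0 : ℝ) 1) (hw : w ∈ Icc (0 : ℝ) 1) :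
    followRatio u w ∈ Icc (0 : ℝ) 1 := by
  unfold followRatio
  split_ifs with h
  · exact ⟨div_nonneg hw.1 hu.1, div_le_one_of_le₀ h hu.1⟩
  · exact ⟨div_nonneg (by linarith [hw.2]) (by linarith [hw.2]),
      div_le_one_of_le₀ (by linarith) (by linarith [hw.2])⟩

theorem mul_followRatio_of_le (hw : 0 ≤ w) (h : w ≤ u) : u * followRatio u w = w := by
  rw [followRatio, if_pos h]
  rcases hw.eq_or_lt with rfl | hw0
  · simp
  · field_simp [show u ≠ 0 by linarith]

theorem one_sub_mul_followRatio_of_lt (hw : w ≤ 1) (h : u < w) :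
    (1 - u) * followRatio u w = 1 - w := by
  rw [followRatio, if_neg h.not_ge]
  field_simp [show 1 - u ≠ 0 by linarith]

theorem abs_followRatio_le (hu : u ∈ Icc (0 : ℝ) 1) (hw : w ∈ Icc (0 : ℝ) 1) :
    |followRatio u w| ≤ 1 := by
  obtain ⟨hr0, hr1⟩ := followRatio_mem_Icc hu hw
  exact (abs_of_nonneg hr0).trans_le hr1

theorem follow_sub (un u w : ℝ) : follow un u w - w = followRatio u w * (un - u) := by
  rw [follow]
  ring

theorem follow_mem_Icc (hun : un ∈ Icc (0 : ℝ) 1) (hu : u ∈ Icc (0 : ℝ) 1)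
    (hw : w ∈ Icc (0 : ℝ) 1) : follow un u w ∈ Icc (0 : ℝ) 1 := by
  obtain ⟨hr0, hr1⟩ := followRatio_mem_Icc hu hw
  rcases le_or_gt w u with h | h
  · have hmul := mul_followRatio_of_le hw.1 h
    have : follow un u w = un * followRatio u w := by rw [follow]; linear_combination -hmul
    rw [this]
    exact ⟨mul_nonneg hun.1 hr0, mul_le_one₀ hun.2 hr0 hr1⟩
  · have hmul := one_sub_mul_followRatio_of_lt hw.2 h
    have : follow un u w = 1 - (1 - un) * followRatio u w := by
      rw [follow]; linear_combination hmul
    rw [this]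
    constructor <;> nlinarith [hun.1, hun.2]

theorem abs_sub_follow (hun : un ∈ Icc (0 : ℝ) 1) (hu : u ∈ Icc (0 : ℝ) 1)
    (hw : w ∈ Icc (0 : ℝ) 1) :
    |un - follow un u w| = |u - w| + followL1Coeff u w * (un - u) := by
  obtain ⟨hr0, hr1⟩ := followRatio_mem_Icc hu hw
  rcases le_or_gt w u with h | h
  · have hmul := mul_followRatio_of_le hw.1 h
    have : un - follow un u w = un * (1 - followRatio u w) := by
      rw [follow]; linear_combination hmul
    rw [this, abs_of_nonneg (mul_nonneg hun.1 (by linarith)), abs_of_nonneg (by linarith),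
      followL1Coeff, if_pos h]
    linear_combination -hmul
  · have hmul := one_sub_mul_followRatio_of_lt hw.2 h
    have : un - follow un u w = -((1 - un) * (1 - followRatio u w)) := by
      rw [follow]; linear_combination -hmul
    rw [this, abs_neg, abs_of_nonneg (mul_nonneg (by linarith [hun.2]) (by linarith)),
      abs_of_neg (by linarith), followL1Coeff, if_neg h.not_ge]
    linear_combination -hmul

theorem abs_followL1Coeff_le (hu : u ∈ Icc (0 : ℝ) 1) (hw : w ∈ Icc (0 : ℝ) 1) :
    |followL1Coeff u w| ≤ 1 := by
  obtain ⟨hr0, hr1⟩ := followRatio_mem_Icc hu hw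
  unfold followL1Coeff
  split_ifs <;> rw [abs_le] <;> constructor <;> linarith

theorem measurable_followRatio : Measurable (Function.uncurry followRatio) :=
  Measurable.ite (measurableSet_le measurable_snd measurable_fst)
    (measurable_snd.div measurable_fst)
    ((measurable_const.sub measurable_snd).div (measurable_const.sub measurable_fst))

theorem measurable_followL1Coeff : Measurable (Function.uncurry followL1Coeff) :=
  Measurable.ite (measurableSet_le measurable_snd measurable_fst)
    (measurable_const.sub measurable_followRatio) (measurable_followRatio.sub measurable_const)

end Follow

section FollowGraphon

variable {Un U W : ℝ → ℝ → ℝ}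

theorem isGraphon_follow (hUn : IsGraphon Un) (hU : IsGraphon U) (hW : IsGraphon W) :
    IsGraphon fun x y => follow (Un x y) (U x y) (W x y) :=
  ⟨hW.1.add ((hUn.1.sub hU.1).mul (measurable_followRatio.comp (hU.1.prodMk hW.1))),
    fun x y => by simp only [hUn.2.1 x y, hU.2.1 x y, hW.2.1 x y],
    fun x y => follow_mem_Icc (hUn.2.2 x y) (hU.2.2 x y) (hW.2.2 x y)⟩

theorem l1Norm_sub_follow (hUn : IsGraphon Un) (hU : IsGraphon U) (hW : IsGraphon W) :
    (l1Norm fun x y => Un x y - follow (Un x y) (U x y) (W x y)) =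
      (l1Norm fun x y => U x y - W x y) +
        ∫ p, followL1Coeff (U p.1 p.2) (W p.1 p.2) * (Un p.1 p.2 - U p.1 p.2) ∂unitSqMeasure := by
  have hcoeff : Integrable (fun p : ℝ × ℝ => followL1Coeff (U p.1 p.2) (W p.1 p.2) *
      (Un p.1 p.2 - U p.1 p.2)) unitSqMeasure :=
    (hUn.integrable.sub hU.integrable).bdd_mul
      (measurable_followL1Coeff.comp (hU.1.prodMk hW.1)).aestronglyMeasurable
      (ae_of_all _ fun p => (Real.norm_eq_abs _).trans_le
        (abs_followL1Coeff_le (hU.2.2 p.1 p.2) (hW.2.2 p.1 p.2)))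
  rw [l1Norm_eq_integral_s3 (hUn.integrable_sub (isGraphon_follow hUn hU hW)),
    l1Norm_eq_integral_s3 (hU.integrable_sub hW),
    ← integral_add (hU.integrable_sub hW).abs hcoeff]
  congr 1 with p
  exact abs_sub_follow (hUn.2.2 p.1 p.2) (hU.2.2 p.1 p.2) (hW.2.2 p.1 p.2)

theorem tendstoCutZero_mul_sub_of_tendsto_cutNorm {ι : Type*} {l : Filter ι}
    {Un : ι → ℝ → ℝ → ℝ} (hUn : ∀ i, IsGraphon (Un i)) (hU : IsGraphon U) (hW : IsGraphon W)
    (hconv : Tendsto (fun i => cutNorm fun x y => Un i x y - U x y) l (𝓝 0))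
    {c : ℝ → ℝ → ℝ} (hc : Measurable (Function.uncurry c))
    (hcb : ∀ u w, u ∈ Set.Icc (0 : ℝ) 1 → w ∈ Set.Icc (0 : ℝ) 1 → |c u w| ≤ 1) :
    TendstoCutZero unitSqMeasure l fun i p =>
      c (U p.1 p.2) (W p.1 p.2) * (Un i p.1 p.2 - U p.1 p.2) := by
  refine ((tendsto_cutNorm_zero_iff fun i => (hUn i).integrable_sub hU).1 hconv).mul_left (C := 1)
    (fun i => ((hUn i).1.sub hU.1).aestronglyMeasurable) (fun i p => ?_) ?_
  · exact abs_sub_le_of_nonneg_of_le ((hUn i).2.2 p.1 p.2).1 ((hUn i).2.2 p.1 p.2).2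
      (hU.2.2 p.1 p.2).1 (hU.2.2 p.1 p.2).2
  · exact Integrable.of_bound (hc.comp (hU.1.prodMk hW.1)).aestronglyMeasurable 1
      (ae_of_all _ fun p =>
        (Real.norm_eq_abs _).trans_le (hcb _ _ (hU.2.2 p.1 p.2) (hW.2.2 p.1 p.2)))

end FollowGraphon

theorem exists_seq_l1_tendsto_of_cut_tendsto
    (U : ℝ → ℝ → ℝ) (Useq : ℕ → ℝ → ℝ → ℝ)
    (hU : IsGraphon U) (hUseq : ∀ n, IsGraphon (Useq n))
    (hUconv : Tendsto (fun n => cutNorm fun x y => Useq n x y - U x y) atTop (nhds 0)) :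
    ∀ W : ℝ → ℝ → ℝ, IsGraphon W →
      ∃ Wseq : ℕ → ℝ → ℝ → ℝ, (∀ n, IsGraphon (Wseq n)) ∧
        Tendsto (fun n => cutNorm fun x y => Wseq n x y - W x y) atTop (nhds 0) ∧
        Tendsto (fun n => l1Norm fun x y => Useq n x y - Wseq n x y) atTop
          (nhds (l1Norm fun x y => U x y - W x y)) := by
  intro W hW
  refine ⟨fun n x y => follow (Useq n x y) (U x y) (W x y),
    fun n => isGraphon_follow (hUseq n) hU hW, ?_, ?_⟩
  · rw [tendsto_cutNorm_zero_iff fun n => (isGraphon_follow (hUseq n) hU hW).integrable_sub hW]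
    simpa only [Function.uncurry_def, follow_sub] using
      tendstoCutZero_mul_sub_of_tendsto_cutNorm hUseq hU hW hUconv measurable_followRatio
        fun u w => abs_followRatio_le
  · simp_rw [l1Norm_sub_follow (hUseq _) hU hW]
    simpa using tendsto_const_nhds.add
      (tendstoCutZero_mul_sub_of_tendsto_cutNorm hUseq hU hW hUconv measurable_followL1Coeff
        fun u w => abs_followL1Coeff_le).tendsto_integral

end
end

section
/- Suppose U, W ∈ W₀ and (Uₙ), (Wₙ) are sequences in W₀ with δ_□(Uₙ,U) → 0 and δ_□(Wₙ,W) → 0 as n → ∞. Then liminf_{n→∞} δ₁(Wₙ,Uₙ) ≥ δ₁(W,U). -/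
open MeasureTheory Filter Topology
open scoped ENNReal

noncomputable section

/-!
Approximate `W` and `U` in `L¹` by step kernels `W'`, `U'`. Take `ψ`, `χ` with `Wₙ ≈ W^ψ` and
`Uₙ ≈ U^χ` in cut norm, `φ` nearly optimal for `δ₁(Wₙ, Uₙ)`, and put `θ = χ ∘ φ`, so that
`δ₁(W, U) ≤ ‖W^ψ - U^θ‖₁`. The kernel `W'^ψ - U'^θ` is a step kernel for a partition of `[0,1]`
into `K` classes, with `K` independent of `n`, so its `L¹` norm is the sum of the absolute values
of its integrals over the `K²` cells. Up to the approximation errors it differs from `Wₙ - Uₙ^φ`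
by `(Uₙ - U^χ)^φ - (Wₙ - W^ψ)`, whose integral over any cell is bounded by the two cut norms.
Hence `δ₁(W, U) ≤ δ₁(Wₙ, Uₙ) + K² (δ_□(Wₙ, W) + δ_□(Uₙ, U)) + 2 (‖W - W'‖₁ + ‖U - U'‖₁)`;
let `n → ∞`, then refine the approximations.
-/

open Set

lemma measurableSet_I01 : MeasurableSet I01 := measurableSet_Icc

lemma volume_I01 : volume I01 = 1 := by simp [I01, Real.volume_Icc]

lemma volume_lt_top_of_subset_I01 {S : Set ℝ} (hS : S ⊆ I01) : volume S < ⊤ :=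
  (measure_mono hS).trans_lt (by simp [volume_I01])

lemma measureReal_le_one_of_subset_I01 {S : Set ℝ} (hS : S ⊆ I01) : volume.real S ≤ 1 := by
  simpa [Measure.real, volume_I01] using
    ENNReal.toReal_mono (by simp [volume_I01]) (measure_mono (μ := volume) hS)

def IsBoundedKernel (V : ℝ → ℝ → ℝ) : Prop :=
  Measurable (Function.uncurry V) ∧ ∃ C, ∀ x y, |V x y| ≤ C

lemma IsGraphon.isBoundedKernel {V : ℝ → ℝ → ℝ} (hV : IsGraphon V) : IsBoundedKernel V :=
  ⟨hV.1, 1, fun x y => abs_le.2 ⟨by linarith [(hV.2.2 x y).1], (hV.2.2 x y).2⟩⟩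

namespace IsBoundedKernel

variable {V V' : ℝ → ℝ → ℝ}

lemma sub (hV : IsBoundedKernel V) (hV' : IsBoundedKernel V') :
    IsBoundedKernel fun x y => V x y - V' x y := by
  obtain ⟨C, hC⟩ := hV.2
  obtain ⟨C', hC'⟩ := hV'.2
  exact ⟨hV.1.sub hV'.1, C + C', fun x y => (abs_sub _ _).trans (add_le_add (hC x y) (hC' x y))⟩

lemma abs (hV : IsBoundedKernel V) : IsBoundedKernel fun x y => |V x y| := by
  obtain ⟨C, hC⟩ := hV.2
  exact ⟨hV.1.abs, C, fun x y => by simpa using hC x y⟩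

lemma comp (hV : IsBoundedKernel V) {f : ℝ → ℝ} (hf : Measurable f) :
    IsBoundedKernel fun x y => V (f x) (f y) := by
  obtain ⟨C, hC⟩ := hV.2
  exact ⟨hV.1.comp (hf.prodMap hf), C, fun x y => hC _ _⟩

lemma integrableOn (hV : IsBoundedKernel V) {S T : Set ℝ} (hS : S ⊆ I01) (hT : T ⊆ I01) :
    IntegrableOn (fun z : ℝ × ℝ => V z.1 z.2) (S ×ˢ T) := by
  obtain ⟨C, hC⟩ := hV.2
  refine Measure.integrableOn_of_bounded (M := C) ?_ hV.1.aestronglyMeasurable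
    (ae_of_all _ fun z => hC z.1 z.2)
  rw [Measure.volume_eq_prod, Measure.prod_prod]
  exact ENNReal.mul_ne_top (volume_lt_top_of_subset_I01 hS).ne
    (volume_lt_top_of_subset_I01 hT).ne

lemma iteratedIntegral_eq (hV : IsBoundedKernel V) {S T : Set ℝ} (hS : S ⊆ I01)
    (hT : T ⊆ I01) : ∫ x in S, ∫ y in T, V x y = ∫ z in S ×ˢ T, V z.1 z.2 :=
  (setIntegral_prod (fun z : ℝ × ℝ => V z.1 z.2) (hV.integrableOn hS hT)).symm

lemma l1Norm_eq (hV : IsBoundedKernel V) : l1Norm V = ∫ z in I01 ×ˢ I01, |V z.1 z.2| :=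
  hV.abs.iteratedIntegral_eq subset_rfl subset_rfl

end IsBoundedKernel

lemma abs_setIntegral_le_of_subset_I01 {f : ℝ → ℝ} {C : ℝ} (hC : ∀ x, |f x| ≤ C)
    {S : Set ℝ} (hS : S ⊆ I01) : |∫ x in S, f x| ≤ C := by
  have hC0 : 0 ≤ C := (abs_nonneg _).trans (hC 0)
  calc |∫ x in S, f x| ≤ C * volume.real S :=
        norm_setIntegral_le_of_norm_le_const (f := f) (volume_lt_top_of_subset_I01 hS)
          fun x _ => hC x
    _ ≤ C := mul_le_of_le_one_right hC0 (measureReal_le_one_of_subset_I01 hS)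

lemma abs_iteratedIntegral_le {V : ℝ → ℝ → ℝ} {C : ℝ} (hC : ∀ x y, |V x y| ≤ C)
    {S T : Set ℝ} (hS : S ⊆ I01) (hT : T ⊆ I01) : |∫ x in S, ∫ y in T, V x y| ≤ C :=
  abs_setIntegral_le_of_subset_I01 (fun x => abs_setIntegral_le_of_subset_I01 (hC x) hT) hS

lemma l1Norm_nonneg (V : ℝ → ℝ → ℝ) : 0 ≤ l1Norm V :=
  integral_nonneg fun _ => integral_nonneg fun _ => abs_nonneg _

lemma l1Norm_le_of_abs_le {V : ℝ → ℝ → ℝ} {C : ℝ} (hC : ∀ x y, |V x y| ≤ C) :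
    l1Norm V ≤ C :=
  (le_abs_self _).trans (abs_iteratedIntegral_le (fun x y => by simpa using hC x y)
    subset_rfl subset_rfl)

lemma l1Norm_le_add {V V' V'' : ℝ → ℝ → ℝ} (hV : IsBoundedKernel V)
    (hV' : IsBoundedKernel V') (hV'' : IsBoundedKernel V'')
    (h : ∀ x y, |V x y| ≤ |V' x y| + |V'' x y|) : l1Norm V ≤ l1Norm V' + l1Norm V'' := by
  rw [hV.l1Norm_eq, hV'.l1Norm_eq, hV''.l1Norm_eq,
    ← integral_add (hV'.abs.integrableOn subset_rfl subset_rfl)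
      (hV''.abs.integrableOn subset_rfl subset_rfl)]
  exact setIntegral_mono (hV.abs.integrableOn subset_rfl subset_rfl)
    ((hV'.abs.integrableOn subset_rfl subset_rfl).add
      (hV''.abs.integrableOn subset_rfl subset_rfl)) fun z => h z.1 z.2

lemma l1Norm_congr {V V' : ℝ → ℝ → ℝ} (h : ∀ x ∈ I01, ∀ y ∈ I01, V x y = V' x y) :
    l1Norm V = l1Norm V' :=
  setIntegral_congr_fun measurableSet_I01 fun x hx =>
    setIntegral_congr_fun measurableSet_I01 fun y hy => by simp only [h x hx y hy]

lemma cutNorm_le_s4 {V : ℝ → ℝ → ℝ} {c : ℝ}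
    (h : ∀ S T : Set ℝ, MeasurableSet S → MeasurableSet T → S ⊆ I01 → T ⊆ I01 →
      |∫ x in S, ∫ y in T, V x y| ≤ c) : cutNorm V ≤ c :=
  csSup_le ⟨_, ∅, ∅, MeasurableSet.empty, MeasurableSet.empty, empty_subset _,
    empty_subset _, rfl⟩ fun _ ⟨S, T, hS, hT, hSI, hTI, hr⟩ => hr ▸ h S T hS hT hSI hTI

lemma le_cutNorm {V : ℝ → ℝ → ℝ} (hV : IsBoundedKernel V) {S T : Set ℝ}
    (hS : MeasurableSet S) (hT : MeasurableSet T) (hSI : S ⊆ I01) (hTI : T ⊆ I01) :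
    |∫ x in S, ∫ y in T, V x y| ≤ cutNorm V := by
  obtain ⟨C, hC⟩ := hV.2
  exact le_csSup ⟨C, fun _ ⟨S, T, _, _, hSI, hTI, hr⟩ => hr ▸ abs_iteratedIntegral_le hC hSI hTI⟩
    ⟨S, T, hS, hT, hSI, hTI, rfl⟩

lemma cutNorm_sub_le {V V' : ℝ → ℝ → ℝ} (hV : IsBoundedKernel V) (hV' : IsBoundedKernel V') :
    cutNorm (fun x y => V x y - V' x y) ≤ cutNorm V + cutNorm V' := by
  refine cutNorm_le_s4 fun S T hS hT hSI hTI => ?_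
  have hsplit : ∫ x in S, ∫ y in T, (V x y - V' x y)
      = (∫ x in S, ∫ y in T, V x y) - ∫ x in S, ∫ y in T, V' x y := by
    rw [(hV.sub hV').iteratedIntegral_eq hSI hTI, hV.iteratedIntegral_eq hSI hTI,
      hV'.iteratedIntegral_eq hSI hTI]
    exact integral_sub (hV.integrableOn hSI hTI) (hV'.integrableOn hSI hTI)
  rw [hsplit]
  exact (abs_sub _ _).trans
    (add_le_add (le_cutNorm hV hS hT hSI hTI) (le_cutNorm hV' hS hT hSI hTI))

lemma MeasureTheory.MeasurePreserving.integral_comp_of_aestronglyMeasurable {α β : Type*}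
    [MeasurableSpace α] [MeasurableSpace β] {μ : Measure α} {ν : Measure β} {f : α → β}
    (hf : MeasurePreserving f μ ν) {g : β → ℝ} (hg : AEStronglyMeasurable g ν) :
    ∫ x, g (f x) ∂μ = ∫ y, g y ∂ν := by
  conv_rhs => rw [← hf.map_eq]
  exact (integral_map hf.measurable.aemeasurable (hf.map_eq ▸ hg)).symm

namespace InvMP

def refl : InvMP :=
  ⟨id, id, fun _ h => h, fun _ h => h, .id _, .id _, fun _ _ => rfl, fun _ _ => rfl⟩

instance : Nonempty InvMP := ⟨refl⟩

def symm (φ : InvMP) : InvMP :=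
  ⟨φ.invFun, φ.toFun, φ.mapsInv, φ.maps, φ.measurePreservingInv, φ.measurePreserving,
    φ.rightInv, φ.leftInv⟩

def comp (φ ψ : InvMP) : InvMP where
  toFun := φ.toFun ∘ ψ.toFun
  invFun := ψ.invFun ∘ φ.invFun
  maps x hx := φ.maps _ (ψ.maps x hx)
  mapsInv x hx := ψ.mapsInv _ (φ.mapsInv x hx)
  measurePreserving := φ.measurePreserving.comp ψ.measurePreserving
  measurePreservingInv := ψ.measurePreservingInv.comp φ.measurePreservingInv
  leftInv x hx := by simp only [Function.comp_apply, φ.leftInv _ (ψ.maps x hx), ψ.leftInv x hx]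
  rightInv x hx := by
    simp only [Function.comp_apply, ψ.rightInv _ (φ.mapsInv x hx), φ.rightInv x hx]

variable (φ : InvMP)

lemma measurable : Measurable φ.toFun := φ.measurePreserving.measurable

/-- The image `φ(S)` of a set `S ⊆ [0,1]`. -/
def image (S : Set ℝ) : Set ℝ := I01 ∩ φ.invFun ⁻¹' S

lemma image_subset (S : Set ℝ) : φ.image S ⊆ I01 := inter_subset_left

lemma measurableSet_image {S : Set ℝ} (hS : MeasurableSet S) : MeasurableSet (φ.image S) :=
  measurableSet_I01.inter (φ.measurePreservingInv.measurable hS)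

lemma image_I01 : φ.image I01 = I01 :=
  inter_eq_left.2 fun x hx => φ.mapsInv x hx

lemma setIntegral_comp {f : ℝ → ℝ} (hf : Measurable f) {S : Set ℝ} (hS : MeasurableSet S)
    (hSI : S ⊆ I01) : ∫ x in S, f (φ.toFun x) = ∫ x in φ.image S, f x := by
  have hS' : MeasurableSet (φ.invFun ⁻¹' S) := φ.measurePreservingInv.measurable hS
  have hind : ∀ x ∈ I01, S.indicator (fun x => f (φ.toFun x)) x
      = (φ.invFun ⁻¹' S).indicator f (φ.toFun x) := fun x hx => by
    by_cases h : x ∈ S <;> simp [h, φ.leftInv x hx]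
  calc ∫ x in S, f (φ.toFun x)
      = ∫ x in I01, S.indicator (fun x => f (φ.toFun x)) x := by
        rw [setIntegral_indicator hS, inter_eq_right.2 hSI]
    _ = ∫ x in I01, (φ.invFun ⁻¹' S).indicator f (φ.toFun x) :=
        setIntegral_congr_fun measurableSet_I01 hind
    _ = ∫ x in I01, (φ.invFun ⁻¹' S).indicator f x :=
        φ.measurePreserving.integral_comp_of_aestronglyMeasurable
          (hf.indicator hS').aestronglyMeasurable
    _ = ∫ x in φ.image S, f x := setIntegral_indicator hS'

lemma iteratedIntegral_comp {V : ℝ → ℝ → ℝ} (hV : Measurable (Function.uncurry V))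
    {S T : Set ℝ} (hS : MeasurableSet S) (hT : MeasurableSet T) (hSI : S ⊆ I01)
    (hTI : T ⊆ I01) :
    ∫ x in S, ∫ y in T, V (φ.toFun x) (φ.toFun y) = ∫ x in φ.image S, ∫ y in φ.image T, V x y := by
  have hinner : ∀ x, ∫ y in T, V x (φ.toFun y) = ∫ y in φ.image T, V x y := fun x =>
    φ.setIntegral_comp (hV.comp measurable_prodMk_left) hT hTI
  simp only [hinner]
  exact φ.setIntegral_comp (hV.stronglyMeasurable.integral_prod_right).measurable hS hSI

lemma l1Norm_comp {V : ℝ → ℝ → ℝ} (hV : Measurable (Function.uncurry V)) :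
    l1Norm (fun x y => V (φ.toFun x) (φ.toFun y)) = l1Norm V := by
  have h := φ.iteratedIntegral_comp (V := fun x y => |V x y|) hV.abs measurableSet_I01
    measurableSet_I01 subset_rfl subset_rfl
  rwa [image_I01] at h

lemma cutNorm_comp_le {V : ℝ → ℝ → ℝ} (hV : IsBoundedKernel V) :
    cutNorm (fun x y => V (φ.toFun x) (φ.toFun y)) ≤ cutNorm V :=
  cutNorm_le_s4 fun S T hS hT hSI hTI => by
    rw [φ.iteratedIntegral_comp hV.1 hS hT hSI hTI]
    exact le_cutNorm hV (φ.measurableSet_image hS) (φ.measurableSet_image hT)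
      (φ.image_subset S) (φ.image_subset T)

end InvMP

lemma delta1_le_l1Norm (U W : ℝ → ℝ → ℝ) (φ : InvMP) :
    delta1 U W ≤ l1Norm (fun x y => U x y - W (φ.toFun x) (φ.toFun y)) :=
  ciInf_le ⟨0, forall_mem_range.2 fun _ => l1Norm_nonneg _⟩ φ

lemma delta1_le_l1Norm_comp {U W : ℝ → ℝ → ℝ} (hU : Measurable (Function.uncurry U))
    (hW : Measurable (Function.uncurry W)) (ψ θ : InvMP) :
    delta1 U W ≤ l1Norm (fun x y => U (ψ.toFun x) (ψ.toFun y) - W (θ.toFun x) (θ.toFun y)) := by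
  set ρ := θ.comp ψ.symm
  have hρψ : ∀ x ∈ I01, ρ.toFun (ψ.toFun x) = θ.toFun x := fun x hx =>
    congrArg θ.toFun (ψ.leftInv x hx)
  calc delta1 U W ≤ l1Norm (fun x y => U x y - W (ρ.toFun x) (ρ.toFun y)) :=
        delta1_le_l1Norm U W ρ
    _ = l1Norm (fun x y => U (ψ.toFun x) (ψ.toFun y)
          - W (ρ.toFun (ψ.toFun x)) (ρ.toFun (ψ.toFun y))) :=
        (ψ.l1Norm_comp (V := fun x y => U x y - W (ρ.toFun x) (ρ.toFun y))
          (hU.sub (hW.comp (ρ.measurable.prodMap ρ.measurable)))).symm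
    _ = _ := l1Norm_congr fun x hx y hy => by rw [hρψ x hx, hρψ y hy]

lemma delta1_le_one {U W : ℝ → ℝ → ℝ} (hU : IsGraphon U) (hW : IsGraphon W) :
    delta1 U W ≤ 1 :=
  (delta1_le_l1Norm U W InvMP.refl).trans <| l1Norm_le_of_abs_le fun x y =>
    (abs_sub_le_of_le_of_le (hU.2.2 x y).1 (hU.2.2 x y).2 (hW.2.2 _ _).1 (hW.2.2 _ _).2).trans_eq
      (sub_zero 1)

lemma setIntegral_eq_sum_fiber {α ι : Type*} [MeasurableSpace α] [MeasurableSpace ι]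
    [MeasurableSingletonClass ι] {μ : Measure α} {s : Set α} (hs : MeasurableSet s)
    {f : α → ι} (hf : Measurable f) {t : Finset ι} (hst : MapsTo f s t) {g : α → ℝ}
    (hg : IntegrableOn g s μ) : ∫ x in s, g x ∂μ = ∑ i ∈ t, ∫ x in s ∩ f ⁻¹' {i}, g x ∂μ := by
  have hcover : s = ⋃ i ∈ t, s ∩ f ⁻¹' {i} := by
    rw [← inter_iUnion₂, Finset.set_biUnion_preimage_singleton]
    exact (inter_eq_left.2 hst).symm
  conv_lhs => rw [hcover]
  exact integral_biUnion_finset t (fun i _ => hs.inter (hf (measurableSet_singleton i)))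
    ((pairwiseDisjoint_fiber f (t : Set ι)).mono fun _ => inter_subset_right)
    fun _ _ => hg.mono_set inter_subset_left

lemma abs_setIntegral_eq_setIntegral_abs_of_eqOn {α : Type*} [MeasurableSpace α]
    {μ : Measure α} {s : Set α} (hs : MeasurableSet s) {f : α → ℝ} {c : ℝ}
    (h : ∀ x ∈ s, f x = c) : |∫ x in s, f x ∂μ| = ∫ x in s, |f x| ∂μ := by
  rw [setIntegral_congr_fun hs h, setIntegral_congr_fun hs fun x hx => congrArg abs (h x hx),
    setIntegral_const, setIntegral_const, smul_eq_mul, smul_eq_mul, abs_mul,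
    abs_of_nonneg measureReal_nonneg]

lemma abs_setIntegral_prod_le_cutNorm_add {Y Z F : ℝ → ℝ → ℝ} (hY : IsBoundedKernel Y)
    (hZ : IsBoundedKernel Z) (hF : IsBoundedKernel F) {S T : Set ℝ} (hS : MeasurableSet S)
    (hT : MeasurableSet T) (hSI : S ⊆ I01) (hTI : T ⊆ I01) :
    |∫ z in S ×ˢ T, Y z.1 z.2| ≤ (∫ z in S ×ˢ T, |F z.1 z.2|)
      + cutNorm (fun x y => Z x y - F x y) + ∫ z in S ×ˢ T, |Z z.1 z.2 - Y z.1 z.2| := by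
  have hZF := hZ.sub hF
  have hZY := hZ.sub hY
  have hsplit : ∫ z in S ×ˢ T, Y z.1 z.2 = (∫ z in S ×ˢ T, F z.1 z.2)
      + (∫ z in S ×ˢ T, (Z z.1 z.2 - F z.1 z.2)) - ∫ z in S ×ˢ T, (Z z.1 z.2 - Y z.1 z.2) := by
    linarith [integral_sub (hZ.integrableOn hSI hTI) (hF.integrableOn hSI hTI),
      integral_sub (hZ.integrableOn hSI hTI) (hY.integrableOn hSI hTI)]
  have hcut : |∫ z in S ×ˢ T, (Z z.1 z.2 - F z.1 z.2)| ≤ cutNorm fun x y => Z x y - F x y := by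
    rw [← hZF.iteratedIntegral_eq hSI hTI]
    exact le_cutNorm hZF hS hT hSI hTI
  rw [hsplit]
  calc _ ≤ |∫ z in S ×ˢ T, F z.1 z.2| + |∫ z in S ×ˢ T, (Z z.1 z.2 - F z.1 z.2)|
        + |∫ z in S ×ˢ T, (Z z.1 z.2 - Y z.1 z.2)| :=
        (abs_sub _ _).trans (add_le_add_left (abs_add_le _ _) _)
    _ ≤ _ := add_le_add (add_le_add abs_integral_le_integral_abs hcut)
        abs_integral_le_integral_abs

theorem l1Norm_le_of_step {ι : Type*} [MeasurableSpace ι] [MeasurableSingletonClass ι]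
    {q : ℝ → ι} (hq : Measurable q) {t : Finset ι} (ht : MapsTo q I01 t) {w : ι → ι → ℝ}
    {Z F : ℝ → ℝ → ℝ} (hY : IsBoundedKernel fun x y => w (q x) (q y))
    (hZ : IsBoundedKernel Z) (hF : IsBoundedKernel F) :
    l1Norm Z ≤ l1Norm F + (t.card : ℝ) ^ 2 * cutNorm (fun x y => Z x y - F x y)
      + 2 * l1Norm (fun x y => Z x y - w (q x) (q y)) := by
  have hfiber : ∀ a, MeasurableSet (I01 ∩ q ⁻¹' {a}) := fun a =>
    measurableSet_I01.inter (hq (measurableSet_singleton a))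
  have hcell : ∀ p : ι × ι, I01 ×ˢ I01 ∩ Prod.map q q ⁻¹' {p}
      = (I01 ∩ q ⁻¹' {p.1}) ×ˢ (I01 ∩ q ⁻¹' {p.2}) := by
    rintro ⟨a, b⟩
    ext ⟨x, y⟩
    simp only [mem_inter_iff, mem_prod, mem_preimage, Prod.map_apply, mem_singleton_iff,
      Prod.mk.injEq]
    tauto
  have hsum : ∀ {V : ℝ → ℝ → ℝ}, IsBoundedKernel V → l1Norm V
      = ∑ p ∈ t ×ˢ t, ∫ z in (I01 ∩ q ⁻¹' {p.1}) ×ˢ (I01 ∩ q ⁻¹' {p.2}), |V z.1 z.2| := by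
    intro V hV
    rw [hV.l1Norm_eq, setIntegral_eq_sum_fiber (measurableSet_I01.prod measurableSet_I01)
      (hq.prodMap hq) (t := t ×ˢ t) (fun z hz => Finset.mem_product.2 ⟨ht hz.1, ht hz.2⟩)
      (hV.abs.integrableOn subset_rfl subset_rfl)]
    simp only [hcell]
  have hcellY : ∀ p ∈ t ×ˢ t,
      ∫ z in (I01 ∩ q ⁻¹' {p.1}) ×ˢ (I01 ∩ q ⁻¹' {p.2}), |w (q z.1) (q z.2)|
        ≤ (∫ z in (I01 ∩ q ⁻¹' {p.1}) ×ˢ (I01 ∩ q ⁻¹' {p.2}), |F z.1 z.2|)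
          + cutNorm (fun x y => Z x y - F x y)
          + ∫ z in (I01 ∩ q ⁻¹' {p.1}) ×ˢ (I01 ∩ q ⁻¹' {p.2}),
              |Z z.1 z.2 - w (q z.1) (q z.2)| := fun p _ => by
    rw [← abs_setIntegral_eq_setIntegral_abs_of_eqOn ((hfiber _).prod (hfiber _))
      (c := w p.1 p.2) fun z hz => by rw [hz.1.2, hz.2.2]]
    exact abs_setIntegral_prod_le_cutNorm_add hY hZ hF (hfiber _) (hfiber _) inter_subset_left
      inter_subset_left
  have hY_le := Finset.sum_le_sum hcellY
  rw [Finset.sum_add_distrib, Finset.sum_add_distrib, Finset.sum_const, Finset.card_product,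
    nsmul_eq_mul, ← hsum hY, ← hsum hF, ← hsum (hZ.sub hY)] at hY_le
  have hZ_le := l1Norm_le_add hZ hY (hZ.sub hY) fun x y => by
    linarith [abs_sub_abs_le_abs_sub (Z x y) (w (q x) (q y))]
  push_cast at hY_le
  linarith

lemma HasCompactSupport.isBoundedKernel {g : ℝ × ℝ → ℝ} (hgc : HasCompactSupport g)
    (hg : Continuous g) : IsBoundedKernel fun x y => g (x, y) := by
  obtain ⟨C, hC⟩ := hgc.exists_bound_of_continuous hg
  exact ⟨hg.measurable, C, fun x y => hC (x, y)⟩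

/-- The step kernel with value `w i j` on the cell `((i-1)/m, i/m] × ((j-1)/m, j/m]`. -/
def gridKernel (m : ℕ) (w : ℤ → ℤ → ℝ) : ℝ → ℝ → ℝ := fun x y => w ⌈x * m⌉ ⌈y * m⌉

lemma isBoundedKernel_gridKernel (m : ℕ) {w : ℤ → ℤ → ℝ} {C : ℝ} (hw : ∀ a b, |w a b| ≤ C) :
    IsBoundedKernel (gridKernel m w) :=
  ⟨(measurable_of_countable (Function.uncurry w)).comp
    ((measurable_fst.mul_const _).ceil.prodMk (measurable_snd.mul_const _).ceil),
    C, fun _ _ => hw _ _⟩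

lemma ceil_mul_mem_Icc {m : ℕ} {x : ℝ} (hx : x ∈ I01) : ⌈x * m⌉ ∈ Finset.Icc (0 : ℤ) m :=
  Finset.mem_Icc.2 ⟨Int.ceil_nonneg (mul_nonneg hx.1 m.cast_nonneg),
    Int.ceil_le.2 (by simpa using mul_le_of_le_one_left m.cast_nonneg hx.2)⟩

lemma abs_sub_ceil_mul_div_le {m : ℕ} (hm : 0 < m) (x : ℝ) : |x - ⌈x * m⌉ / m| ≤ 1 / m := by
  have hm' : (0 : ℝ) < m := Nat.cast_pos.2 hm
  rw [abs_sub_comm, show (⌈x * m⌉ : ℝ) / m - x = (⌈x * m⌉ - x * m) / m by field_simp,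
    abs_div, abs_of_pos hm', abs_of_nonneg (sub_nonneg.2 (Int.le_ceil _))]
  exact div_le_div_of_nonneg_right (by linarith [Int.ceil_lt_add_one (x * m)]) hm'.le

lemma exists_continuous_l1Norm_sub_le {V : ℝ → ℝ → ℝ} (hV : IsBoundedKernel V) {ε : ℝ}
    (hε : 0 < ε) : ∃ g : ℝ × ℝ → ℝ, Continuous g ∧ HasCompactSupport g ∧
      l1Norm (fun x y => V x y - g (x, y)) ≤ ε := by
  have hsq : MeasurableSet (I01 ×ˢ I01) := measurableSet_I01.prod measurableSet_I01
  set f := (I01 ×ˢ I01).indicator fun z : ℝ × ℝ => V z.1 z.2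
  have hf : Integrable f := (hV.integrableOn subset_rfl subset_rfl).integrable_indicator hsq
  obtain ⟨g, hgc, hfg, hg, hgi⟩ := hf.exists_hasCompactSupport_integral_sub_le hε
  refine ⟨g, hg, hgc, ?_⟩
  rw [(hV.sub (hgc.isBoundedKernel hg)).l1Norm_eq]
  calc ∫ z in I01 ×ˢ I01, |V z.1 z.2 - g (z.1, z.2)| = ∫ z in I01 ×ˢ I01, ‖f z - g z‖ :=
        setIntegral_congr_fun hsq fun z hz => by simp [f, indicator_of_mem hz]
    _ ≤ ∫ z, ‖f z - g z‖ :=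
        setIntegral_le_integral (hf.sub hgi).norm (ae_of_all _ fun _ => norm_nonneg _)
    _ ≤ ε := hfg

lemma exists_gridKernel_l1Norm_sub_le_of_continuous {g : ℝ × ℝ → ℝ} (hg : Continuous g)
    (hgc : HasCompactSupport g) {ε : ℝ} (hε : 0 < ε) : ∃ m : ℕ,
      l1Norm (fun x y => g (x, y) - gridKernel m (fun a b => g (a / m, b / m)) x y) ≤ ε := by
  obtain ⟨δ, hδ, hgδ⟩ :=
    Metric.uniformContinuous_iff.1 (hgc.uniformContinuous_of_continuous hg) ε hε
  obtain ⟨n, hn⟩ := exists_nat_one_div_lt hδ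
  have hclose : ∀ x : ℝ, dist x (⌈x * (n + 1 : ℕ)⌉ / (n + 1 : ℕ)) < δ := fun x =>
    (abs_sub_ceil_mul_div_le n.succ_pos x).trans_lt (by exact_mod_cast hn)
  refine ⟨n + 1, l1Norm_le_of_abs_le fun x y => (hgδ ?_).le⟩
  rw [Prod.dist_eq]
  exact max_lt (hclose x) (hclose y)

lemma exists_gridKernel_l1Norm_sub_le {V : ℝ → ℝ → ℝ} (hV : IsBoundedKernel V) {ε : ℝ}
    (hε : 0 < ε) : ∃ (m : ℕ) (w : ℤ → ℤ → ℝ), IsBoundedKernel (gridKernel m w) ∧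
      l1Norm (fun x y => V x y - gridKernel m w x y) ≤ ε := by
  obtain ⟨g, hg, hgc, hVg⟩ := exists_continuous_l1Norm_sub_le hV (half_pos hε)
  obtain ⟨m, hgm⟩ := exists_gridKernel_l1Norm_sub_le_of_continuous hg hgc (half_pos hε)
  obtain ⟨C, hC⟩ := hgc.exists_bound_of_continuous hg
  have hG := isBoundedKernel_gridKernel m (w := fun a b => g (a / m, b / m)) fun a b => hC _
  have hgK := hgc.isBoundedKernel hg
  refine ⟨m, _, hG, ?_⟩
  linarith [l1Norm_le_add (hV.sub hG) (hV.sub hgK) (hgK.sub hG) fun x y => abs_sub_le _ _ _]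

lemma l1Norm_le_of_gridKernel_comp {Z F : ℝ → ℝ → ℝ} (hZ : IsBoundedKernel Z)
    (hF : IsBoundedKernel F) {m₁ m₂ : ℕ} {w₁ w₂ : ℤ → ℤ → ℝ}
    (hW' : IsBoundedKernel (gridKernel m₁ w₁)) (hU' : IsBoundedKernel (gridKernel m₂ w₂))
    (ψ θ : InvMP) :
    l1Norm Z ≤ l1Norm F + ((m₁ + 1) * (m₂ + 1) : ℝ) ^ 2 * cutNorm (fun x y => Z x y - F x y)
      + 2 * l1Norm (fun x y => Z x y
        - (gridKernel m₁ w₁ (ψ.toFun x) (ψ.toFun y) - gridKernel m₂ w₂ (θ.toFun x) (θ.toFun y))) := by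
  have hcard : ((Finset.Icc (0 : ℤ) m₁ ×ˢ Finset.Icc (0 : ℤ) m₂).card : ℝ)
      = (m₁ + 1) * (m₂ + 1) := by
    simp [Finset.card_product, Int.card_Icc]
  rw [← hcard]
  -- The kernel is constant on the cells cut out by the grid labels of `ψ x` and `θ x`.
  exact l1Norm_le_of_step (q := fun x => (⌈ψ.toFun x * m₁⌉, ⌈θ.toFun x * m₂⌉))
    (w := fun p p' => w₁ p.1 p'.1 - w₂ p.2 p'.2)
    (((measurable_id.mul_const _).ceil.comp ψ.measurable).prodMk
      ((measurable_id.mul_const _).ceil.comp θ.measurable))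
    (fun x hx => Finset.mem_product.2
      ⟨ceil_mul_mem_Icc (ψ.maps x hx), ceil_mul_mem_Icc (θ.maps x hx)⟩)
    ((hW'.comp ψ.measurable).sub (hU'.comp θ.measurable)) hZ hF

theorem delta1_le_l1Norm_add_cutNorm {W U W₁ U₁ : ℝ → ℝ → ℝ} (hW : IsBoundedKernel W)
    (hU : IsBoundedKernel U) (hW₁ : IsBoundedKernel W₁) (hU₁ : IsBoundedKernel U₁)
    {m₁ m₂ : ℕ} {w₁ w₂ : ℤ → ℤ → ℝ} (hW' : IsBoundedKernel (gridKernel m₁ w₁))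
    (hU' : IsBoundedKernel (gridKernel m₂ w₂)) (φ ψ χ : InvMP) :
    delta1 W U ≤ l1Norm (fun x y => W₁ x y - U₁ (φ.toFun x) (φ.toFun y))
      + ((m₁ + 1) * (m₂ + 1) : ℝ) ^ 2 *
        (cutNorm (fun x y => W₁ x y - W (ψ.toFun x) (ψ.toFun y))
          + cutNorm (fun x y => U₁ x y - U (χ.toFun x) (χ.toFun y)))
      + 2 * (l1Norm (fun x y => W x y - gridKernel m₁ w₁ x y)
          + l1Norm (fun x y => U x y - gridKernel m₂ w₂ x y)) := by
  set θ := χ.comp φ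
  set Z := fun x y => W (ψ.toFun x) (ψ.toFun y) - U (θ.toFun x) (θ.toFun y)
  set F := fun x y => W₁ x y - U₁ (φ.toFun x) (φ.toFun y)
  have hZ : IsBoundedKernel Z := (hW.comp ψ.measurable).sub (hU.comp θ.measurable)
  have hF : IsBoundedKernel F := hW₁.sub (hU₁.comp φ.measurable)
  have hstep := l1Norm_le_of_gridKernel_comp hZ hF hW' hU' ψ θ
  have hG₁ := hW₁.sub (hW.comp ψ.measurable)
  have hG₂ := hU₁.sub (hU.comp χ.measurable)
  have hcut : cutNorm (fun x y => Z x y - F x y)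
      ≤ cutNorm (fun x y => W₁ x y - W (ψ.toFun x) (ψ.toFun y))
        + cutNorm (fun x y => U₁ x y - U (χ.toFun x) (χ.toFun y)) :=
    calc cutNorm (fun x y => Z x y - F x y)
        = cutNorm (fun x y => (U₁ (φ.toFun x) (φ.toFun y) - U (θ.toFun x) (θ.toFun y))
            - (W₁ x y - W (ψ.toFun x) (ψ.toFun y))) := congrArg cutNorm (by ext; ring)
      _ ≤ _ := cutNorm_sub_le (hG₂.comp φ.measurable) hG₁
      _ ≤ _ := add_le_add_left (φ.cutNorm_comp_le hG₂) _
      _ = _ := add_comm _ _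
  have hEW := hW.sub hW'
  have hEU := hU.sub hU'
  have herr : l1Norm (fun x y => Z x y
        - (gridKernel m₁ w₁ (ψ.toFun x) (ψ.toFun y) - gridKernel m₂ w₂ (θ.toFun x) (θ.toFun y)))
      ≤ l1Norm (fun x y => W x y - gridKernel m₁ w₁ x y)
        + l1Norm (fun x y => U x y - gridKernel m₂ w₂ x y) := by
    rw [← ψ.l1Norm_comp hEW.1, ← θ.l1Norm_comp hEU.1]
    exact l1Norm_le_add (hZ.sub ((hW'.comp ψ.measurable).sub (hU'.comp θ.measurable)))
      (hEW.comp ψ.measurable) (hEU.comp θ.measurable) fun x y => by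
        simpa only [Z, sub_sub_sub_comm] using abs_sub _ _
  have hK := mul_le_mul_of_nonneg_left hcut (sq_nonneg ((m₁ + 1) * (m₂ + 1) : ℝ))
  linarith [delta1_le_l1Norm_comp hW.1 hU.1 ψ θ]

theorem delta1_le_delta1_add_deltaCut {W U W₁ U₁ : ℝ → ℝ → ℝ} (hW : IsBoundedKernel W)
    (hU : IsBoundedKernel U) (hW₁ : IsBoundedKernel W₁) (hU₁ : IsBoundedKernel U₁)
    {m₁ m₂ : ℕ} {w₁ w₂ : ℤ → ℤ → ℝ} (hW' : IsBoundedKernel (gridKernel m₁ w₁))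
    (hU' : IsBoundedKernel (gridKernel m₂ w₂)) :
    delta1 W U ≤ delta1 W₁ U₁
      + ((m₁ + 1) * (m₂ + 1) : ℝ) ^ 2 * (deltaCut W₁ W + deltaCut U₁ U)
      + 2 * (l1Norm (fun x y => W x y - gridKernel m₁ w₁ x y)
          + l1Norm (fun x y => U x y - gridKernel m₂ w₂ x y)) := by
  set K := ((m₁ + 1) * (m₂ + 1) : ℝ) ^ 2
  set E := 2 * (l1Norm (fun x y => W x y - gridKernel m₁ w₁ x y)
    + l1Norm (fun x y => U x y - gridKernel m₂ w₂ x y))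
  have hK : 0 ≤ K := sq_nonneg _
  have h := delta1_le_l1Norm_add_cutNorm hW hU hW₁ hU₁ hW' hU'
  have h₁ : ∀ ψ χ : InvMP, delta1 W U - K * cutNorm (fun x y => W₁ x y - W (ψ.toFun x) (ψ.toFun y))
      - K * cutNorm (fun x y => U₁ x y - U (χ.toFun x) (χ.toFun y)) - E ≤ delta1 W₁ U₁ :=
    fun ψ χ => le_ciInf fun φ => by linarith [h φ ψ χ]
  have h₂ : ∀ χ : InvMP, delta1 W U - delta1 W₁ U₁
      - K * cutNorm (fun x y => U₁ x y - U (χ.toFun x) (χ.toFun y)) - E ≤ K * deltaCut W₁ W :=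
    fun χ => by
      rw [deltaCut.eq_1 W₁ W, Real.mul_iInf_of_nonneg hK]
      exact le_ciInf fun ψ => by linarith [h₁ ψ χ]
  have h₃ : delta1 W U - delta1 W₁ U₁ - K * deltaCut W₁ W - E ≤ K * deltaCut U₁ U := by
    rw [deltaCut.eq_1 U₁ U, Real.mul_iInf_of_nonneg hK]
    exact le_ciInf fun χ => by linarith [h₂ χ]
  linarith

theorem liminf_delta1_ge_of_deltaCut_tendsto
    (U W : ℝ → ℝ → ℝ) (Useq Wseq : ℕ → ℝ → ℝ → ℝ)
    (hU : IsGraphon U) (hW : IsGraphon W)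
    (hUseq : ∀ n, IsGraphon (Useq n)) (hWseq : ∀ n, IsGraphon (Wseq n))
    (hUconv : Tendsto (fun n => deltaCut (Useq n) U) atTop (nhds 0))
    (hWconv : Tendsto (fun n => deltaCut (Wseq n) W) atTop (nhds 0)) :
    delta1 W U ≤ Filter.liminf (fun n => delta1 (Wseq n) (Useq n)) atTop := by
  have hcobdd : IsCoboundedUnder (· ≥ ·) atTop fun n => delta1 (Wseq n) (Useq n) :=
    isCoboundedUnder_ge_of_le atTop fun n => delta1_le_one (hWseq n) (hUseq n)
  refine le_of_forall_pos_le_add fun ε hε => ?_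
  obtain ⟨m₁, w₁, hW', hWerr⟩ :=
    exists_gridKernel_l1Norm_sub_le hW.isBoundedKernel (ε := ε / 8) (by positivity)
  obtain ⟨m₂, w₂, hU', hUerr⟩ :=
    exists_gridKernel_l1Norm_sub_le hU.isBoundedKernel (ε := ε / 8) (by positivity)
  have hcut : Tendsto (fun n => ((m₁ + 1) * (m₂ + 1) : ℝ) ^ 2
      * (deltaCut (Wseq n) W + deltaCut (Useq n) U)) atTop (nhds 0) := by
    simpa using (hWconv.add hUconv).const_mul (((m₁ + 1) * (m₂ + 1) : ℝ) ^ 2)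
  have hev : ∀ᶠ n in atTop, delta1 W U - ε ≤ delta1 (Wseq n) (Useq n) := by
    filter_upwards [hcut.eventually_le_const (half_pos hε)] with n hn
    linarith [delta1_le_delta1_add_deltaCut hW.isBoundedKernel hU.isBoundedKernel
      (hWseq n).isBoundedKernel (hUseq n).isBoundedKernel hW' hU']
  linarith [le_liminf_of_le hcobdd hev]

end
end
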